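/- arXiv:1806.11487 — 3 statements merged into one kernel-verified Lean document; each statement's English description precedes it below -/
import Mathlib

section
/- Linear growth of the first sensitivity with respect to the velocity of the Maxwellian: let g be a classical solution of ∂_t g + (v + u*) ∂_x g = L₀ g whose spatial derivative ∂_x g is also a classical solution of the same equation satisfying the energy hypotheses, and let h be a classical solution of the source-term equation ∂_t h + (v + u*) ∂_x h = L₀ h − c ∂_x g, where c ∈ ℝ satisfies |c| ≤ C, with h satisfying the energy hypotheses. Then for all t ≥ 0, ‖h(t)‖ ≤ ‖h(0)‖ + C ‖∂_x g_i‖ t, where g_i(x,v) = g(0,x,v); in particular ‖h(t)‖ grows at most linearly in time. -/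
open MeasureTheory Real

/-- **Energy hypotheses** for a function `w(t,x,v)` with time derivative `wt`,
spatial derivative `wx`, velocity weight `M` and transport coefficient `a(v)`:
`w` is continuously differentiable in `t` and `x`, the energy
`E(t) = ‖w(t)‖² = ∫∫ w(t,x,v)² M(v) dv dx` is finite and differentiable with
`E'(t) = 2 ∫∫ w ∂ₜw M dv dx`, and the transport term integrates to zero,
`∫∫ a(v) w ∂ₓw M dv dx = 0` (sufficient decay as `|x| → ∞`). -/
structure EnergyHyp (M : ℝ → ℝ) (a : ℝ → ℝ) (w wt wx : ℝ → ℝ → ℝ → ℝ) : Prop where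
  hasDerivAt_t : ∀ t x v, 0 ≤ t → HasDerivAt (fun s => w s x v) (wt t x v) t
  hasDerivAt_x : ∀ t x v, 0 ≤ t → HasDerivAt (fun y => w t y v) (wx t x v) x
  cont_wt : Continuous fun q : ℝ × ℝ × ℝ => wt q.1 q.2.1 q.2.2
  cont_wx : Continuous fun q : ℝ × ℝ × ℝ => wx q.1 q.2.1 q.2.2
  int_v : ∀ t x, 0 ≤ t → Integrable fun v => (w t x v) ^ 2 * M v
  int_x : ∀ t, 0 ≤ t → Integrable fun x => ∫ v, (w t x v) ^ 2 * M v
  energy_hasDerivAt : ∀ t, 0 ≤ t →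
    HasDerivAt (fun s => ∫ x, ∫ v, (w s x v) ^ 2 * M v)
      (2 * ∫ x, ∫ v, w t x v * wt t x v * M v) t
  transport_zero : ∀ t, 0 ≤ t → ∫ x, ∫ v, a v * w t x v * wx t x v * M v = 0

/-- `Pw t x ·` is the orthogonal projection `Π` of `w t x ·` onto
`span{1, v, v²}` in `L²(M dv)`: it lies in the span and the residual is
orthogonal to every quadratic polynomial. -/
def IsProjection (M : ℝ → ℝ) (w Pw : ℝ → ℝ → ℝ → ℝ) : Prop :=
  (∀ t x, ∃ a b c : ℝ, ∀ v, Pw t x v = a + b * v + c * v ^ 2) ∧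
  (∀ (t x a b c : ℝ), ∫ v, (w t x v - Pw t x v) * (a + b * v + c * v ^ 2) * M v = 0)


/-- Growth bound from a derivative bound on `[0, ∞)`. -/
lemma aux_grow (f f' : ℝ → ℝ) (K : ℝ)
    (hd : ∀ s, 0 ≤ s → HasDerivAt f (f' s) s)
    (hb : ∀ s, 0 ≤ s → f' s ≤ K) :
    ∀ t, 0 ≤ t → f t ≤ f 0 + K * t := by
  intro t ht
  have hder : ∀ s, 0 ≤ s → HasDerivAt (fun r => K * r - f r) (K - f' s) s := by
    intro s hs
    have h1 : HasDerivAt (fun r : ℝ => K * r) K s := by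
      simpa using (hasDerivAt_id s).const_mul K
    exact h1.sub (hd s hs)
  have hmono : MonotoneOn (fun s => K * s - f s) (Set.Icc 0 t) := by
    apply monotoneOn_of_deriv_nonneg (convex_Icc 0 t)
    · exact fun s hs => (hder s hs.1).continuousAt.continuousWithinAt
    · intro s hs
      rw [interior_Icc] at hs
      exact (hder s hs.1.le).differentiableAt.differentiableWithinAt
    · intro s hs
      rw [interior_Icc] at hs
      rw [(hder s hs.1.le).deriv]
      linarith [hb s hs.1.le]
  have h2 := hmono (Set.left_mem_Icc.2 ht) (Set.right_mem_Icc.2 ht) ht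
  simp only [mul_zero] at h2
  linarith

/-- Integrability of powers against a Gaussian. -/
lemma aux_pow_gauss {b : ℝ} (hb : 0 < b) (n : ℕ) :
    Integrable (fun v : ℝ => v ^ n * Real.exp (-b * v ^ 2)) := by
  have hint : Integrable (fun v : ℝ => Real.exp (-(b/2) * v ^ 2)) :=
    integrable_exp_neg_mul_sq (by linarith)
  have hAnn : (0:ℝ) ≤ (n.factorial : ℝ) * (2/b) ^ n := by positivity
  apply Integrable.mono' (hint.const_mul (1 + (n.factorial : ℝ) * (2/b) ^ n))
  · apply Continuous.aestronglyMeasurable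
    exact (continuous_pow n).mul (Real.continuous_exp.comp (by fun_prop))
  · filter_upwards with v
    rw [Real.norm_eq_abs]
    have hexp1 : (1:ℝ) ≤ Real.exp ((b/2) * v ^ 2) := Real.one_le_exp (by positivity)
    have key : |v| ^ n ≤ (1 + (n.factorial : ℝ) * (2/b) ^ n) * Real.exp ((b/2) * v ^ 2) := by
      rcases le_or_gt (|v|) 1 with hv | hv
      · have h1 : |v| ^ n ≤ 1 := pow_le_one₀ (abs_nonneg v) hv
        nlinarith
      · have h1 : |v| ^ n ≤ (v ^ 2) ^ n := by
          apply pow_le_pow_left₀ (abs_nonneg v)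
          nlinarith [sq_abs v]
        have h2 : ((b/2) * v ^ 2) ^ n / (n.factorial : ℝ) ≤ Real.exp ((b/2) * v ^ 2) :=
          Real.pow_div_factorial_le_exp (x := (b/2) * v ^ 2) (by positivity) n
        have h3 : (v ^ 2) ^ n = (2/b) ^ n * ((b/2) * v ^ 2) ^ n := by
          rw [← mul_pow]; congr 1; field_simp
        have hfac : (0:ℝ) < (n.factorial : ℝ) := by positivity
        have h4 : ((b/2) * v ^ 2) ^ n ≤ (n.factorial : ℝ) * Real.exp ((b/2) * v ^ 2) := by
          rw [div_le_iff₀ hfac] at h2; linarith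
        have h5 : (0:ℝ) ≤ (2/b) ^ n := by positivity
        calc |v| ^ n ≤ (v ^ 2) ^ n := h1
          _ = (2/b) ^ n * ((b/2) * v ^ 2) ^ n := h3
          _ ≤ (2/b) ^ n * ((n.factorial : ℝ) * Real.exp ((b/2) * v ^ 2)) :=
              mul_le_mul_of_nonneg_left h4 h5
          _ ≤ (1 + (n.factorial : ℝ) * (2/b) ^ n) * Real.exp ((b/2) * v ^ 2) := by
              nlinarith [Real.exp_pos ((b/2) * v ^ 2)]
    have habs : |v ^ n * Real.exp (-b * v ^ 2)| = |v| ^ n * Real.exp (-b * v ^ 2) := by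
      rw [abs_mul, abs_pow, abs_of_pos (Real.exp_pos _)]
    rw [habs]
    calc |v| ^ n * Real.exp (-b * v ^ 2)
        ≤ ((1 + (n.factorial : ℝ) * (2/b) ^ n) * Real.exp ((b/2) * v ^ 2)) *
            Real.exp (-b * v ^ 2) :=
          mul_le_mul_of_nonneg_right key (Real.exp_pos _).le
      _ = (1 + (n.factorial : ℝ) * (2/b) ^ n) * Real.exp (-(b/2) * v ^ 2) := by
          rw [mul_assoc, ← Real.exp_add]; congr 2; ring

/-- AM-GM integrability of a weighted product. -/
lemma aux_wmul {M f g : ℝ → ℝ} (hMnn : ∀ v, 0 ≤ M v)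
    (hm : AEStronglyMeasurable (fun v => f v * g v * M v) volume)
    (hf : Integrable (fun v => (f v) ^ 2 * M v))
    (hg : Integrable (fun v => (g v) ^ 2 * M v)) :
    Integrable (fun v => f v * g v * M v) := by
  apply Integrable.mono' (((hf.add hg)).const_mul (1/2)) hm
  filter_upwards with v
  rw [Real.norm_eq_abs]
  have hM := hMnn v
  have h1 : |f v * g v| ≤ (1/2) * ((f v) ^ 2 + (g v) ^ 2) := by
    apply abs_le.mpr
    constructor <;> nlinarith [sq_nonneg (f v + g v), sq_nonneg (f v - g v)]
  calc |f v * g v * M v| = |f v * g v| * M v := by rw [abs_mul, abs_of_nonneg hM]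
    _ ≤ ((1/2) * ((f v) ^ 2 + (g v) ^ 2)) * M v := mul_le_mul_of_nonneg_right h1 hM
    _ = 1/2 * ((f v) ^ 2 * M v + (g v) ^ 2 * M v) := by ring

/-- Weighted Cauchy–Schwarz for integrals. -/
lemma aux_cs {M f g : ℝ → ℝ} (hMnn : ∀ v, 0 ≤ M v)
    (hf : Integrable (fun v => (f v) ^ 2 * M v))
    (hg : Integrable (fun v => (g v) ^ 2 * M v))
    (hfg : Integrable (fun v => f v * g v * M v)) :
    |∫ v, f v * g v * M v| ≤
      Real.sqrt (∫ v, (f v) ^ 2 * M v) * Real.sqrt (∫ v, (g v) ^ 2 * M v) := by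
  set X := ∫ v, (f v) ^ 2 * M v with hX
  set Y := ∫ v, (g v) ^ 2 * M v with hY
  set Z := ∫ v, f v * g v * M v with hZ
  have hX0 : 0 ≤ X := integral_nonneg fun v => mul_nonneg (sq_nonneg _) (hMnn v)
  have hY0 : 0 ≤ Y := integral_nonneg fun v => mul_nonneg (sq_nonneg _) (hMnn v)
  have key : ∀ s : ℝ, 0 ≤ s ^ 2 * X + 2 * s * Z + Y := by
    intro s
    have h1 : (fun v => (s * f v + g v) ^ 2 * M v) =
        fun v => (s ^ 2 * ((f v) ^ 2 * M v) + (2 * s) * (f v * g v * M v)) +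
          (g v) ^ 2 * M v := funext fun v => by ring
    have h3 : 0 ≤ ∫ v, (s * f v + g v) ^ 2 * M v :=
      integral_nonneg fun v => mul_nonneg (sq_nonneg _) (hMnn v)
    have e1 : ∫ v, ((s ^ 2 * ((f v) ^ 2 * M v) + (2 * s) * (f v * g v * M v)) +
          (g v) ^ 2 * M v) =
        (∫ v, (s ^ 2 * ((f v) ^ 2 * M v) + (2 * s) * (f v * g v * M v))) +
          ∫ v, (g v) ^ 2 * M v :=
      integral_add (by exact (hf.const_mul _).add (hfg.const_mul _)) hg
    have e2 : ∫ v, (s ^ 2 * ((f v) ^ 2 * M v) + (2 * s) * (f v * g v * M v)) =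
        (∫ v, s ^ 2 * ((f v) ^ 2 * M v)) + ∫ v, (2 * s) * (f v * g v * M v) :=
      integral_add (hf.const_mul _) (hfg.const_mul _)
    rw [h1, e1, e2, integral_const_mul, integral_const_mul] at h3
    linarith
  rcases eq_or_lt_of_le hX0 with hXz | hXp
  · have hZ0 : Z = 0 := by
      by_contra hZ0
      have hk := key (-(Y + 1) / (2 * Z))
      rw [← hXz] at hk
      have hs : 2 * (-(Y + 1) / (2 * Z)) * Z = -(Y + 1) := by
        field_simp
      nlinarith
    rw [hZ0, abs_zero]
    positivity
  · have hXne : X ≠ 0 := hXp.ne'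
    have hZ2 : Z ^ 2 ≤ X * Y := by
      have hk := key (-(Z / X))
      have h1 : (-(Z / X)) ^ 2 * X = Z ^ 2 / X := by
        field_simp
      have h2 : 2 * (-(Z / X)) * Z = -(2 * (Z ^ 2 / X)) := by
        rw [mul_neg, neg_mul, neg_inj, mul_assoc, div_mul_eq_mul_div, ← pow_two]
      rw [h1, h2] at hk
      have h3 : Z ^ 2 / X ≤ Y := by linarith
      have := (div_le_iff₀ hXp).mp h3
      nlinarith
    calc |Z| = Real.sqrt (Z ^ 2) := (Real.sqrt_sq_eq_abs Z).symm
      _ ≤ Real.sqrt (X * Y) := Real.sqrt_le_sqrt hZ2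
      _ = Real.sqrt X * Real.sqrt Y := Real.sqrt_mul hX0 _

/-- Core energy-derivative estimate. -/
lemma aux_core
    (M : ℝ → ℝ) (hMc : Continuous M) (hMnn : ∀ v, 0 ≤ M v)
    (hMq : ∀ a b c : ℝ, Integrable (fun v => (a + b * v + c * v ^ 2) ^ 2 * M v))
    (u : ℝ) (w wt wx Pw σf : ℝ → ℝ → ℝ → ℝ)
    (hE : EnergyHyp M (fun v => v + u) w wt wx)
    (hP : IsProjection M w Pw)
    (hPDE : ∀ t x v, 0 ≤ t →
      wt t x v + (v + u) * wx t x v = Pw t x v - w t x v - σf t x v)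
    (hσ_v : ∀ t x, 0 ≤ t → Integrable (fun v => σf t x v * w t x v * M v))
    (hσ_x : ∀ t, 0 ≤ t → Integrable (fun x => ∫ v, σf t x v * w t x v * M v))
    (hσ_cont : ∀ t x, 0 ≤ t → Continuous (fun v => σf t x v))
    (t : ℝ) (ht : 0 ≤ t) :
    ∫ x, ∫ v, w t x v * wt t x v * M v ≤
      ∫ x, |∫ v, σf t x v * w t x v * M v| := by
  -- continuity facts at time `t`
  have hwt_v : ∀ x, Continuous fun v => wt t x v := fun x =>
    hE.cont_wt.comp (continuous_const.prodMk (continuous_const.prodMk continuous_id))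
  have hwx_v : ∀ x, Continuous fun v => wx t x v := fun x =>
    hE.cont_wx.comp (continuous_const.prodMk (continuous_const.prodMk continuous_id))
  have hwt_x : ∀ v, Continuous fun x => wt t x v := fun v =>
    hE.cont_wt.comp (continuous_const.prodMk (continuous_id.prodMk continuous_const))
  have hwx_x : ∀ v, Continuous fun x => wx t x v := fun v =>
    hE.cont_wx.comp (continuous_const.prodMk (continuous_id.prodMk continuous_const))
  have hw_v : ∀ x, Continuous fun v => w t x v := by
    intro x
    obtain ⟨a, b, cc, habc⟩ := hP.1 t x
    have hwe : (fun v => w t x v) = fun v =>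
        (a + b * v + cc * v ^ 2) - σf t x v - wt t x v - (v + u) * wx t x v := by
      funext v
      have hp := hPDE t x v ht
      rw [habc v] at hp
      linarith
    rw [hwe]
    exact (((((continuous_const.add (continuous_const.mul continuous_id)).add
      (continuous_const.mul (continuous_pow 2))).sub (hσ_cont t x ht)).sub
      (hwt_v x)).sub ((continuous_id.add continuous_const).mul (hwx_v x)))
  have hw_x : ∀ v, Continuous fun x => w t x v := fun v =>
    continuous_iff_continuousAt.2 fun x => (hE.hasDerivAt_x t x v ht).continuousAt
  -- strong measurability in x of the two parametric integrals
  have smI : AEStronglyMeasurable (fun x => ∫ v, w t x v * wt t x v * M v) volume := by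
    have sm : StronglyMeasurable
        (Function.uncurry fun x v => w t x v * wt t x v * M v) :=
      stronglyMeasurable_uncurry_of_continuous_of_stronglyMeasurable
        (fun v => ((hw_x v).mul (hwt_x v)).mul continuous_const)
        (fun x => (((hw_v x).mul (hwt_v x)).mul hMc).stronglyMeasurable)
    exact sm.integral_prod_right.aestronglyMeasurable
  have smT : AEStronglyMeasurable
      (fun x => ∫ v, (v + u) * w t x v * wx t x v * M v) volume := by
    have sm : StronglyMeasurable
        (Function.uncurry fun x v => (v + u) * w t x v * wx t x v * M v) :=
      stronglyMeasurable_uncurry_of_continuous_of_stronglyMeasurable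
        (fun v => ((continuous_const.mul (hw_x v)).mul (hwx_x v)).mul continuous_const)
        (fun x => ((((continuous_id.add continuous_const).mul (hw_v x)).mul
          (hwx_v x)).mul hMc).stronglyMeasurable)
    exact sm.integral_prod_right.aestronglyMeasurable
  -- the pointwise (in x) facts
  have key : ∀ x,
      ((∫ v, w t x v * wt t x v * M v) + (∫ v, (v + u) * w t x v * wx t x v * M v) ≤
        |∫ v, σf t x v * w t x v * M v|) ∧
      |(∫ v, w t x v * wt t x v * M v) + (∫ v, (v + u) * w t x v * wx t x v * M v)| ≤
        (∫ v, (w t x v) ^ 2 * M v) + |∫ v, σf t x v * w t x v * M v| := by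
    intro x
    obtain ⟨a, b, cc, habc⟩ := hP.1 t x
    have contP : Continuous fun v => Pw t x v := by
      rw [show (fun v => Pw t x v) = fun v => a + b * v + cc * v ^ 2 from funext habc]
      exact (continuous_const.add (continuous_const.mul continuous_id)).add
        (continuous_const.mul (continuous_pow 2))
    have intW2 : Integrable (fun v => (w t x v) ^ 2 * M v) := hE.int_v t x ht
    have intP2 : Integrable (fun v => (Pw t x v) ^ 2 * M v) := by
      have h0 := hMq a b cc
      apply h0.congr
      filter_upwards with v
      rw [habc v]
    have intWP : Integrable (fun v => w t x v * Pw t x v * M v) :=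
      aux_wmul hMnn (((hw_v x).mul contP).mul hMc).aestronglyMeasurable intW2 intP2
    have intD2 : Integrable (fun v => (w t x v - Pw t x v) ^ 2 * M v) := by
      have he : (fun v => (w t x v - Pw t x v) ^ 2 * M v) = fun v =>
          ((w t x v) ^ 2 * M v - 2 * (w t x v * Pw t x v * M v)) + (Pw t x v) ^ 2 * M v :=
        funext fun v => by ring
      rw [he]
      exact (intW2.sub (intWP.const_mul 2)).add intP2
    have intDP : Integrable (fun v => (w t x v - Pw t x v) * Pw t x v * M v) := by
      have he : (fun v => (w t x v - Pw t x v) * Pw t x v * M v) = fun v =>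
          w t x v * Pw t x v * M v - (Pw t x v) ^ 2 * M v := funext fun v => by ring
      rw [he]
      exact intWP.sub intP2
    have intA : Integrable (fun v => w t x v * (Pw t x v - w t x v) * M v) := by
      have he : (fun v => w t x v * (Pw t x v - w t x v) * M v) = fun v =>
          w t x v * Pw t x v * M v - (w t x v) ^ 2 * M v := funext fun v => by ring
      rw [he]
      exact intWP.sub intW2
    have intB : Integrable (fun v => σf t x v * w t x v * M v) := hσ_v t x ht
    -- orthogonality
    have horth : ∫ v, (w t x v - Pw t x v) * Pw t x v * M v = 0 := by
      have h0 := hP.2 t x a b cc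
      rw [show (fun v => (w t x v - Pw t x v) * Pw t x v * M v) = fun v =>
        (w t x v - Pw t x v) * (a + b * v + cc * v ^ 2) * M v from
        funext fun v => by rw [habc v]]
      exact h0
    have hWP : ∫ v, w t x v * Pw t x v * M v = ∫ v, (Pw t x v) ^ 2 * M v := by
      have hsub : ∫ v, (w t x v - Pw t x v) * Pw t x v * M v =
          (∫ v, w t x v * Pw t x v * M v) - ∫ v, (Pw t x v) ^ 2 * M v := by
        rw [← integral_sub intWP intP2]
        congr 1
        funext v
        ring
      rw [hsub] at horth
      linarith
    have hD2 : ∫ v, (w t x v - Pw t x v) ^ 2 * M v =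
        (∫ v, (w t x v) ^ 2 * M v) - ∫ v, (Pw t x v) ^ 2 * M v := by
      have he : (fun v => (w t x v - Pw t x v) ^ 2 * M v) = fun v =>
          (w t x v) ^ 2 * M v - (2 * (w t x v * Pw t x v * M v) - (Pw t x v) ^ 2 * M v) :=
        funext fun v => by ring
      have e1 : ∫ v, ((w t x v) ^ 2 * M v -
          (2 * (w t x v * Pw t x v * M v) - (Pw t x v) ^ 2 * M v)) =
          (∫ v, (w t x v) ^ 2 * M v) -
            ∫ v, (2 * (w t x v * Pw t x v * M v) - (Pw t x v) ^ 2 * M v) :=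
        integral_sub intW2 (by exact (intWP.const_mul 2).sub intP2)
      have e2 : ∫ v, (2 * (w t x v * Pw t x v * M v) - (Pw t x v) ^ 2 * M v) =
          (∫ v, 2 * (w t x v * Pw t x v * M v)) - ∫ v, (Pw t x v) ^ 2 * M v :=
        integral_sub (intWP.const_mul 2) intP2
      rw [he, e1, e2, integral_const_mul, hWP]
      ring
    have hJ1 : ∫ v, w t x v * (Pw t x v - w t x v) * M v =
        -∫ v, (w t x v - Pw t x v) ^ 2 * M v := by
      have he : (fun v => w t x v * (Pw t x v - w t x v) * M v) = fun v =>
          (-((w t x v - Pw t x v) ^ 2 * M v)) - (w t x v - Pw t x v) * Pw t x v * M v :=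
        funext fun v => by ring
      have e1 : ∫ v, ((-((w t x v - Pw t x v) ^ 2 * M v)) -
          (w t x v - Pw t x v) * Pw t x v * M v) =
          (∫ v, -((w t x v - Pw t x v) ^ 2 * M v)) -
            ∫ v, (w t x v - Pw t x v) * Pw t x v * M v :=
        integral_sub (by exact intD2.neg) intDP
      rw [he, e1, integral_neg, horth]
      ring
    have hD2nn : 0 ≤ ∫ v, (w t x v - Pw t x v) ^ 2 * M v :=
      integral_nonneg fun v => mul_nonneg (sq_nonneg _) (hMnn v)
    have hP2nn : 0 ≤ ∫ v, (Pw t x v) ^ 2 * M v :=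
      integral_nonneg fun v => mul_nonneg (sq_nonneg _) (hMnn v)
    have hW2nn : 0 ≤ ∫ v, (w t x v) ^ 2 * M v :=
      integral_nonneg fun v => mul_nonneg (sq_nonneg _) (hMnn v)
    have hJ1le : ∫ v, w t x v * (Pw t x v - w t x v) * M v ≤ 0 := by
      rw [hJ1]; linarith
    have hJ1lb : -(∫ v, (w t x v) ^ 2 * M v) ≤
        ∫ v, w t x v * (Pw t x v - w t x v) * M v := by
      rw [hJ1, hD2]; linarith
    -- PDE rewriting of the integrand
    have htot : (fun v => w t x v * wt t x v * M v) = fun v =>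
        (w t x v * (Pw t x v - w t x v) * M v - σf t x v * w t x v * M v) -
          (v + u) * w t x v * wx t x v * M v := by
      funext v
      have hp := hPDE t x v ht
      have hwt : wt t x v =
          Pw t x v - w t x v - σf t x v - (v + u) * wx t x v := by linarith
      rw [hwt]; ring
    have hq1 : ∫ v, σf t x v * w t x v * M v ≤ |∫ v, σf t x v * w t x v * M v| :=
      le_abs_self _
    have hq2 : -|∫ v, σf t x v * w t x v * M v| ≤ ∫ v, σf t x v * w t x v * M v :=
      neg_abs_le _
    by_cases hS : Integrable (fun v => (v + u) * w t x v * wx t x v * M v) volume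
    · have hIeq : ∫ v, w t x v * wt t x v * M v =
          ((∫ v, w t x v * (Pw t x v - w t x v) * M v) -
            ∫ v, σf t x v * w t x v * M v) -
            ∫ v, (v + u) * w t x v * wx t x v * M v := by
        have e1 : ∫ v, ((w t x v * (Pw t x v - w t x v) * M v -
            σf t x v * w t x v * M v) - (v + u) * w t x v * wx t x v * M v) =
            (∫ v, (w t x v * (Pw t x v - w t x v) * M v - σf t x v * w t x v * M v)) -
              ∫ v, (v + u) * w t x v * wx t x v * M v :=
          integral_sub (by exact intA.sub intB) hS
        have e2 : ∫ v, (w t x v * (Pw t x v - w t x v) * M v -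
            σf t x v * w t x v * M v) =
            (∫ v, w t x v * (Pw t x v - w t x v) * M v) -
              ∫ v, σf t x v * w t x v * M v :=
          integral_sub intA intB
        rw [htot, e1, e2]
      constructor
      · rw [hIeq]; linarith
      · rw [hIeq]
        have habs2 := abs_nonneg (∫ v, σf t x v * w t x v * M v)
        apply abs_le.mpr
        constructor <;> linarith
    · have hTot_not : ¬ Integrable (fun v => w t x v * wt t x v * M v) volume := by
        intro hcon
        apply hS
        have he : (fun v => (v + u) * w t x v * wx t x v * M v) = fun v =>
            (w t x v * (Pw t x v - w t x v) * M v - σf t x v * w t x v * M v) -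
              w t x v * wt t x v * M v := by
          funext v
          have hp := hPDE t x v ht
          have hwt : wt t x v =
              Pw t x v - w t x v - σf t x v - (v + u) * wx t x v := by linarith
          rw [hwt]; ring
        rw [he]
        exact (intA.sub intB).sub hcon
      rw [integral_undef hTot_not, integral_undef hS]
      constructor
      · simpa using abs_nonneg (∫ v, σf t x v * w t x v * M v)
      · simp only [add_zero, abs_zero]
        positivity
  -- the x-level argument
  have Φint : Integrable (fun x => (∫ v, w t x v * wt t x v * M v) +
      (∫ v, (v + u) * w t x v * wx t x v * M v)) := by
    apply Integrable.mono' ((hE.int_x t ht).add ((hσ_x t ht).abs)) (smI.add smT)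
    filter_upwards with x
    rw [Real.norm_eq_abs]
    exact (key x).2
  by_cases hI : Integrable (fun x => ∫ v, w t x v * wt t x v * M v) volume
  · have hTz : Integrable (fun x => ∫ v, (v + u) * w t x v * wx t x v * M v) := by
      have he : (fun x => ∫ v, (v + u) * w t x v * wx t x v * M v) = fun x =>
          ((∫ v, w t x v * wt t x v * M v) +
            (∫ v, (v + u) * w t x v * wx t x v * M v)) -
            ∫ v, w t x v * wt t x v * M v := funext fun x => by ring
      rw [he]
      exact Φint.sub hI
    have htz0 : ∫ x, ∫ v, (v + u) * w t x v * wx t x v * M v = 0 :=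
      hE.transport_zero t ht
    have hsplit : ∫ x, ((∫ v, w t x v * wt t x v * M v) +
        (∫ v, (v + u) * w t x v * wx t x v * M v)) =
        (∫ x, ∫ v, w t x v * wt t x v * M v) +
          ∫ x, ∫ v, (v + u) * w t x v * wx t x v * M v :=
      integral_add hI hTz
    have hmono : ∫ x, ((∫ v, w t x v * wt t x v * M v) +
        (∫ v, (v + u) * w t x v * wx t x v * M v)) ≤
        ∫ x, |∫ v, σf t x v * w t x v * M v| :=
      integral_mono Φint (hσ_x t ht).abs fun x => (key x).1
    rw [hsplit, htz0, add_zero] at hmono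
    exact hmono
  · rw [integral_undef hI]
    exact integral_nonneg fun x => abs_nonneg _

/-- **Linear growth of the first sensitivity w.r.t. the velocity of the Maxwellian.**
Fix `ρ* > 0`, `u* ∈ ℝ`, `T* > 0` and let `M₀(v) = (ρ*/√(2πT*)) exp(−v²/(2T*))`.
Let `g` be a classical solution of `∂ₜg + (v + u*) ∂ₓg = L₀ g` whose spatial
derivative `gx = ∂ₓg` is also a classical solution of the same equation
satisfying the energy hypotheses, and let `h` be a classical solution of the
source-term equation `∂ₜh + (v + u*) ∂ₓh = L₀ h − c ∂ₓg` with `|c| ≤ C`,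
with `h` satisfying the energy hypotheses.  Then
`‖h(t)‖ ≤ ‖h(0)‖ + C ‖∂ₓg_i‖ t` for all `t ≥ 0`, where `g_i = g(0,·,·)`;
in particular `‖h(t)‖` grows at most linearly in time. -/
theorem linear_growth_first_sensitivity_velocity
    (ρstar ustar Tstar : ℝ) (hρ : 0 < ρstar) (hT : 0 < Tstar)
    (M₀ : ℝ → ℝ)
    (hM₀ : ∀ v, M₀ v = ρstar / Real.sqrt (2 * Real.pi * Tstar) *
      Real.exp (-v ^ 2 / (2 * Tstar)))
    -- `g` is a classical solution of the shifted linearized BGK equation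
    (g gt gx Pg : ℝ → ℝ → ℝ → ℝ)
    (hgt : ∀ t x v, 0 ≤ t → HasDerivAt (fun s => g s x v) (gt t x v) t)
    (hgx : ∀ t x v, 0 ≤ t → HasDerivAt (fun y => g t y v) (gx t x v) x)
    (hproj : IsProjection M₀ g Pg)
    (hPDE : ∀ t x v, 0 ≤ t →
      gt t x v + (v + ustar) * gx t x v = Pg t x v - g t x v)
    -- `∂ₓ g` is also a classical solution of the same equation,
    -- satisfying the energy hypotheses
    (gxt gxx Pgx : ℝ → ℝ → ℝ → ℝ)
    (hprojx : IsProjection M₀ gx Pgx)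
    (hPDEx : ∀ t x v, 0 ≤ t →
      gxt t x v + (v + ustar) * gxx t x v = Pgx t x v - gx t x v)
    (hEx : EnergyHyp M₀ (fun v => v + ustar) gx gxt gxx)
    -- the sensitivity `h` solves the equation with source `− c ∂ₓ g`, `|c| ≤ C`
    (c C : ℝ) (hc : |c| ≤ C)
    (h ht hx Ph : ℝ → ℝ → ℝ → ℝ)
    (hprojh : IsProjection M₀ h Ph)
    (hPDEh : ∀ t x v, 0 ≤ t →
      ht t x v + (v + ustar) * hx t x v = Ph t x v - h t x v - c * gx t x v)
    (hEh : EnergyHyp M₀ (fun v => v + ustar) h ht hx)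
    -- integrability of the cross term appearing in the energy estimate
    (hcross_v : ∀ t x, 0 ≤ t → Integrable fun v => gx t x v * h t x v * M₀ v)
    (hcross_x : ∀ t, 0 ≤ t → Integrable fun x => ∫ v, gx t x v * h t x v * M₀ v) :
    ∀ t : ℝ, 0 ≤ t →
      Real.sqrt (∫ x, ∫ v, (h t x v) ^ 2 * M₀ v) ≤
        Real.sqrt (∫ x, ∫ v, (h 0 x v) ^ 2 * M₀ v) +
          C * Real.sqrt (∫ x, ∫ v, (gx 0 x v) ^ 2 * M₀ v) * t := by
  -- basic facts about the Maxwellian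
  have hMc : Continuous M₀ := by
    rw [funext hM₀]
    fun_prop
  have hMnn : ∀ v, 0 ≤ M₀ v := fun v => by
    rw [hM₀ v]
    positivity
  have hMq : ∀ a b cq : ℝ, Integrable (fun v => (a + b * v + cq * v ^ 2) ^ 2 * M₀ v) := by
    intro a b cq
    have hq : (0:ℝ) < 1 / (2 * Tstar) := by positivity
    have base : ∀ n : ℕ,
        Integrable (fun v : ℝ => v ^ n * Real.exp (-(1 / (2 * Tstar)) * v ^ 2)) :=
      fun n => aux_pow_gauss hq n
    have he : (fun v => (a + b * v + cq * v ^ 2) ^ 2 * M₀ v) = fun v =>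
        ((((ρstar / Real.sqrt (2 * Real.pi * Tstar) * a ^ 2) *
            (v ^ 0 * Real.exp (-(1 / (2 * Tstar)) * v ^ 2)) +
          (ρstar / Real.sqrt (2 * Real.pi * Tstar) * (2 * a * b)) *
            (v ^ 1 * Real.exp (-(1 / (2 * Tstar)) * v ^ 2))) +
          (ρstar / Real.sqrt (2 * Real.pi * Tstar) * (b ^ 2 + 2 * a * cq)) *
            (v ^ 2 * Real.exp (-(1 / (2 * Tstar)) * v ^ 2))) +
          (ρstar / Real.sqrt (2 * Real.pi * Tstar) * (2 * b * cq)) *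
            (v ^ 3 * Real.exp (-(1 / (2 * Tstar)) * v ^ 2))) +
          (ρstar / Real.sqrt (2 * Real.pi * Tstar) * cq ^ 2) *
            (v ^ 4 * Real.exp (-(1 / (2 * Tstar)) * v ^ 2)) := by
      funext v
      rw [hM₀ v]
      have hexp : Real.exp (-v ^ 2 / (2 * Tstar)) =
          Real.exp (-(1 / (2 * Tstar)) * v ^ 2) := by
        congr 1
        ring
      rw [hexp]
      ring
    rw [he]
    exact (((((base 0).const_mul _).add ((base 1).const_mul _)).add
      ((base 2).const_mul _)).add ((base 3).const_mul _)).add ((base 4).const_mul _)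
  -- continuity of gx in the velocity variable
  have hgx_v : ∀ t x, 0 ≤ t → Continuous fun v => gx t x v := by
    intro t x ht'
    obtain ⟨a, b, cq, habc⟩ := hprojx.1 t x
    have he : (fun v => gx t x v) = fun v =>
        (a + b * v + cq * v ^ 2) - gxt t x v - (v + ustar) * gxx t x v := by
      funext v
      have hp := hPDEx t x v ht'
      rw [habc v] at hp
      linarith
    rw [he]
    have c1 : Continuous fun v => gxt t x v :=
      hEx.cont_wt.comp (continuous_const.prodMk (continuous_const.prodMk continuous_id))
    have c2 : Continuous fun v => gxx t x v :=
      hEx.cont_wx.comp (continuous_const.prodMk (continuous_const.prodMk continuous_id))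
    exact (((continuous_const.add (continuous_const.mul continuous_id)).add
      (continuous_const.mul (continuous_pow 2))).sub c1).sub
      ((continuous_id.add continuous_const).mul c2)
  -- energy of gx is non-increasing
  have coreg : ∀ s, 0 ≤ s → 2 * (∫ x, ∫ v, gx s x v * gxt s x v * M₀ v) ≤ 0 := by
    intro s hs
    have hσv : ∀ t x, (0:ℝ) ≤ t →
        Integrable (fun v => (fun _ _ _ => (0:ℝ)) t x v * gx t x v * M₀ v) := by
      intro t x ht'
      have he : (fun v => (fun _ _ _ => (0:ℝ)) t x v * gx t x v * M₀ v) =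
          fun _ : ℝ => (0:ℝ) := funext fun v => by simp
      rw [he]
      exact integrable_zero _ _ _
    have hσx : ∀ t : ℝ, (0:ℝ) ≤ t →
        Integrable (fun x => ∫ v, (fun _ _ _ => (0:ℝ)) t x v * gx t x v * M₀ v) := by
      intro t ht'
      have he : (fun x => ∫ v, (fun _ _ _ => (0:ℝ)) t x v * gx t x v * M₀ v) =
          fun _ : ℝ => (0:ℝ) := funext fun x => by simp
      rw [he]
      exact integrable_zero _ _ _
    have h0 := aux_core M₀ hMc hMnn hMq ustar gx gxt gxx Pgx (fun _ _ _ => (0:ℝ))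
      hEx hprojx (fun t x v ht' => by simpa using hPDEx t x v ht')
      hσv hσx (fun _ _ _ => continuous_const) s hs
    simp only [zero_mul, integral_zero, abs_zero] at h0
    linarith
  have hEg_le : ∀ s, 0 ≤ s → (∫ x, ∫ v, (gx s x v) ^ 2 * M₀ v) ≤
      ∫ x, ∫ v, (gx 0 x v) ^ 2 * M₀ v := by
    intro s hs
    have hgrow := aux_grow (fun r => ∫ x, ∫ v, (gx r x v) ^ 2 * M₀ v)
      (fun r => 2 * ∫ x, ∫ v, gx r x v * gxt r x v * M₀ v) 0
      (fun r hr => hEx.energy_hasDerivAt r hr) (fun r hr => coreg r hr) s hs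
    simpa using hgrow
  -- the inner product rewrite
  have hinner : ∀ s x, ∫ v, (fun s x v => c * gx s x v) s x v * h s x v * M₀ v =
      c * ∫ v, gx s x v * h s x v * M₀ v := by
    intro s x
    rw [← integral_const_mul]
    congr 1
    funext v
    ring
  -- core estimate for h
  have coreh : ∀ s, 0 ≤ s → (∫ x, ∫ v, h s x v * ht s x v * M₀ v) ≤
      |c| * ∫ x, |∫ v, gx s x v * h s x v * M₀ v| := by
    intro s hs
    have hσv : ∀ t x, (0:ℝ) ≤ t →
        Integrable (fun v => (fun s x v => c * gx s x v) t x v * h t x v * M₀ v) := by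
      intro t x ht'
      exact ((hcross_v t x ht').const_mul c).congr (ae_of_all _ fun v => by ring)
    have hσx : ∀ t : ℝ, (0:ℝ) ≤ t →
        Integrable (fun x => ∫ v, (fun s x v => c * gx s x v) t x v * h t x v * M₀ v) := by
      intro t ht'
      exact ((hcross_x t ht').const_mul c).congr (ae_of_all _ fun x => (hinner t x).symm)
    have h0 := aux_core M₀ hMc hMnn hMq ustar h ht hx Ph (fun s x v => c * gx s x v)
      hEh hprojh (fun t x v ht' => hPDEh t x v ht')
      hσv hσx (fun t x ht' => continuous_const.mul (hgx_v t x ht')) s hs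
    calc (∫ x, ∫ v, h s x v * ht s x v * M₀ v)
        ≤ ∫ x, |∫ v, (fun s x v => c * gx s x v) s x v * h s x v * M₀ v| := h0
      _ = ∫ x, |c| * |∫ v, gx s x v * h s x v * M₀ v| := by
          congr 1
          funext x
          rw [hinner s x, abs_mul]
      _ = |c| * ∫ x, |∫ v, gx s x v * h s x v * M₀ v| := integral_const_mul _ _
  -- Cauchy-Schwarz chain
  have hcs : ∀ s, 0 ≤ s → (∫ x, |∫ v, gx s x v * h s x v * M₀ v|) ≤
      Real.sqrt (∫ x, ∫ v, (gx s x v) ^ 2 * M₀ v) *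
        Real.sqrt (∫ x, ∫ v, (h s x v) ^ 2 * M₀ v) := by
    intro s hs
    have csv : ∀ x, |∫ v, gx s x v * h s x v * M₀ v| ≤
        Real.sqrt (∫ v, (gx s x v) ^ 2 * M₀ v) *
          Real.sqrt (∫ v, (h s x v) ^ 2 * M₀ v) := fun x =>
      aux_cs (M := M₀) (f := fun v => gx s x v) (g := fun v => h s x v)
        hMnn (hEx.int_v s x hs) (hEh.int_v s x hs) (hcross_v s x hs)
    have hFmeas : AEStronglyMeasurable
        (fun x => Real.sqrt (∫ v, (gx s x v) ^ 2 * M₀ v)) volume :=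
      Real.continuous_sqrt.comp_aestronglyMeasurable (hEx.int_x s hs).aestronglyMeasurable
    have hGmeas : AEStronglyMeasurable
        (fun x => Real.sqrt (∫ v, (h s x v) ^ 2 * M₀ v)) volume :=
      Real.continuous_sqrt.comp_aestronglyMeasurable (hEh.int_x s hs).aestronglyMeasurable
    have eF : (fun x => (Real.sqrt (∫ v, (gx s x v) ^ 2 * M₀ v)) ^ 2 * (1:ℝ)) =
        fun x => ∫ v, (gx s x v) ^ 2 * M₀ v := funext fun x => by
      rw [mul_one, Real.sq_sqrt (integral_nonneg fun v =>
        mul_nonneg (sq_nonneg _) (hMnn v))]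
    have eG : (fun x => (Real.sqrt (∫ v, (h s x v) ^ 2 * M₀ v)) ^ 2 * (1:ℝ)) =
        fun x => ∫ v, (h s x v) ^ 2 * M₀ v := funext fun x => by
      rw [mul_one, Real.sq_sqrt (integral_nonneg fun v =>
        mul_nonneg (sq_nonneg _) (hMnn v))]
    have hF2 : Integrable (fun x =>
        (Real.sqrt (∫ v, (gx s x v) ^ 2 * M₀ v)) ^ 2 * (1:ℝ)) := by
      rw [eF]; exact hEx.int_x s hs
    have hG2 : Integrable (fun x =>
        (Real.sqrt (∫ v, (h s x v) ^ 2 * M₀ v)) ^ 2 * (1:ℝ)) := by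
      rw [eG]; exact hEh.int_x s hs
    have hFG : Integrable (fun x => Real.sqrt (∫ v, (gx s x v) ^ 2 * M₀ v) *
        Real.sqrt (∫ v, (h s x v) ^ 2 * M₀ v) * (1:ℝ)) :=
      aux_wmul (fun _ => zero_le_one)
        ((hFmeas.mul hGmeas).mul aestronglyMeasurable_const) hF2 hG2
    have hFGnn : 0 ≤ ∫ x, Real.sqrt (∫ v, (gx s x v) ^ 2 * M₀ v) *
        Real.sqrt (∫ v, (h s x v) ^ 2 * M₀ v) * (1:ℝ) :=
      integral_nonneg fun x => by positivity
    calc (∫ x, |∫ v, gx s x v * h s x v * M₀ v|)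
        ≤ ∫ x, Real.sqrt (∫ v, (gx s x v) ^ 2 * M₀ v) *
            Real.sqrt (∫ v, (h s x v) ^ 2 * M₀ v) * (1:ℝ) :=
          integral_mono (hcross_x s hs).abs hFG fun x => by
            rw [mul_one]; exact csv x
      _ = |∫ x, Real.sqrt (∫ v, (gx s x v) ^ 2 * M₀ v) *
            Real.sqrt (∫ v, (h s x v) ^ 2 * M₀ v) * (1:ℝ)| := (abs_of_nonneg hFGnn).symm
      _ ≤ Real.sqrt (∫ x, (Real.sqrt (∫ v, (gx s x v) ^ 2 * M₀ v)) ^ 2 * (1:ℝ)) *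
            Real.sqrt (∫ x, (Real.sqrt (∫ v, (h s x v) ^ 2 * M₀ v)) ^ 2 * (1:ℝ)) :=
          aux_cs (M := fun _ => (1:ℝ)) (fun _ => zero_le_one) hF2 hG2 hFG
      _ = Real.sqrt (∫ x, ∫ v, (gx s x v) ^ 2 * M₀ v) *
            Real.sqrt (∫ x, ∫ v, (h s x v) ^ 2 * M₀ v) := by rw [eF, eG]
  -- the derivative bound for the energy of h
  have hC0 : 0 ≤ C := le_trans (abs_nonneg c) hc
  have hDh : ∀ s, 0 ≤ s → 2 * (∫ x, ∫ v, h s x v * ht s x v * M₀ v) ≤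
      2 * (C * Real.sqrt (∫ x, ∫ v, (gx 0 x v) ^ 2 * M₀ v)) *
        Real.sqrt (∫ x, ∫ v, (h s x v) ^ 2 * M₀ v) := by
    intro s hs
    have h1 := coreh s hs
    have h2 := hcs s hs
    have h3 : Real.sqrt (∫ x, ∫ v, (gx s x v) ^ 2 * M₀ v) ≤
        Real.sqrt (∫ x, ∫ v, (gx 0 x v) ^ 2 * M₀ v) := Real.sqrt_le_sqrt (hEg_le s hs)
    have hsq1 : 0 ≤ Real.sqrt (∫ x, ∫ v, (h s x v) ^ 2 * M₀ v) := Real.sqrt_nonneg _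
    have hsq2 : 0 ≤ Real.sqrt (∫ x, ∫ v, (gx s x v) ^ 2 * M₀ v) := Real.sqrt_nonneg _
    have s1 : (∫ x, ∫ v, h s x v * ht s x v * M₀ v) ≤
        |c| * (Real.sqrt (∫ x, ∫ v, (gx s x v) ^ 2 * M₀ v) *
          Real.sqrt (∫ x, ∫ v, (h s x v) ^ 2 * M₀ v)) :=
      le_trans h1 (mul_le_mul_of_nonneg_left h2 (abs_nonneg c))
    have s2 : |c| * (Real.sqrt (∫ x, ∫ v, (gx s x v) ^ 2 * M₀ v) *
          Real.sqrt (∫ x, ∫ v, (h s x v) ^ 2 * M₀ v)) ≤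
        C * (Real.sqrt (∫ x, ∫ v, (gx 0 x v) ^ 2 * M₀ v) *
          Real.sqrt (∫ x, ∫ v, (h s x v) ^ 2 * M₀ v)) :=
      mul_le_mul hc (mul_le_mul_of_nonneg_right h3 hsq1)
        (mul_nonneg hsq2 hsq1) hC0
    calc 2 * (∫ x, ∫ v, h s x v * ht s x v * M₀ v)
        ≤ 2 * (C * (Real.sqrt (∫ x, ∫ v, (gx 0 x v) ^ 2 * M₀ v) *
            Real.sqrt (∫ x, ∫ v, (h s x v) ^ 2 * M₀ v))) := by linarith
      _ = 2 * (C * Real.sqrt (∫ x, ∫ v, (gx 0 x v) ^ 2 * M₀ v)) *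
            Real.sqrt (∫ x, ∫ v, (h s x v) ^ 2 * M₀ v) := by ring
  -- Gronwall-type conclusion
  have hEhnn : ∀ s : ℝ, 0 ≤ ∫ x, ∫ v, (h s x v) ^ 2 * M₀ v := fun s =>
    integral_nonneg fun x => integral_nonneg fun v => mul_nonneg (sq_nonneg _) (hMnn v)
  intro t ht'
  have hK0 : 0 ≤ C * Real.sqrt (∫ x, ∫ v, (gx 0 x v) ^ 2 * M₀ v) :=
    mul_nonneg hC0 (Real.sqrt_nonneg _)
  have main : ∀ ε : ℝ, 0 < ε → Real.sqrt (∫ x, ∫ v, (h t x v) ^ 2 * M₀ v) ≤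
      (Real.sqrt (∫ x, ∫ v, (h 0 x v) ^ 2 * M₀ v) +
        C * Real.sqrt (∫ x, ∫ v, (gx 0 x v) ^ 2 * M₀ v) * t) + ε := by
    intro ε hε
    have hε2 : (0:ℝ) < ε ^ 2 := by positivity
    have hd : ∀ s, 0 ≤ s → HasDerivAt
        (fun r => Real.sqrt ((∫ x, ∫ v, (h r x v) ^ 2 * M₀ v) + ε ^ 2))
        ((2 * ∫ x, ∫ v, h s x v * ht s x v * M₀ v) /
          (2 * Real.sqrt ((∫ x, ∫ v, (h s x v) ^ 2 * M₀ v) + ε ^ 2))) s := by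
      intro s hs
      exact ((hEh.energy_hasDerivAt s hs).add_const (ε ^ 2)).sqrt
        (by have := hEhnn s; positivity)
    have hb : ∀ s, 0 ≤ s →
        (2 * ∫ x, ∫ v, h s x v * ht s x v * M₀ v) /
          (2 * Real.sqrt ((∫ x, ∫ v, (h s x v) ^ 2 * M₀ v) + ε ^ 2)) ≤
        C * Real.sqrt (∫ x, ∫ v, (gx 0 x v) ^ 2 * M₀ v) := by
      intro s hs
      have hpos : 0 < Real.sqrt ((∫ x, ∫ v, (h s x v) ^ 2 * M₀ v) + ε ^ 2) :=
        Real.sqrt_pos.2 (by have := hEhnn s; linarith)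
      rw [div_le_iff₀ (by linarith)]
      have b1 := hDh s hs
      have b2 : Real.sqrt (∫ x, ∫ v, (h s x v) ^ 2 * M₀ v) ≤
          Real.sqrt ((∫ x, ∫ v, (h s x v) ^ 2 * M₀ v) + ε ^ 2) :=
        Real.sqrt_le_sqrt (by linarith)
      calc 2 * ∫ x, ∫ v, h s x v * ht s x v * M₀ v
          ≤ 2 * (C * Real.sqrt (∫ x, ∫ v, (gx 0 x v) ^ 2 * M₀ v)) *
              Real.sqrt (∫ x, ∫ v, (h s x v) ^ 2 * M₀ v) := b1
        _ ≤ 2 * (C * Real.sqrt (∫ x, ∫ v, (gx 0 x v) ^ 2 * M₀ v)) *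
              Real.sqrt ((∫ x, ∫ v, (h s x v) ^ 2 * M₀ v) + ε ^ 2) :=
            mul_le_mul_of_nonneg_left b2 (by linarith)
        _ = C * Real.sqrt (∫ x, ∫ v, (gx 0 x v) ^ 2 * M₀ v) *
              (2 * Real.sqrt ((∫ x, ∫ v, (h s x v) ^ 2 * M₀ v) + ε ^ 2)) := by ring
    have hgrow := aux_grow
      (fun r => Real.sqrt ((∫ x, ∫ v, (h r x v) ^ 2 * M₀ v) + ε ^ 2))
      (fun s => (2 * ∫ x, ∫ v, h s x v * ht s x v * M₀ v) /
        (2 * Real.sqrt ((∫ x, ∫ v, (h s x v) ^ 2 * M₀ v) + ε ^ 2)))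
      (C * Real.sqrt (∫ x, ∫ v, (gx 0 x v) ^ 2 * M₀ v)) hd hb t ht'
    have e1 : Real.sqrt (∫ x, ∫ v, (h t x v) ^ 2 * M₀ v) ≤
        Real.sqrt ((∫ x, ∫ v, (h t x v) ^ 2 * M₀ v) + ε ^ 2) :=
      Real.sqrt_le_sqrt (by linarith)
    have e2 : Real.sqrt ((∫ x, ∫ v, (h 0 x v) ^ 2 * M₀ v) + ε ^ 2) ≤
        Real.sqrt (∫ x, ∫ v, (h 0 x v) ^ 2 * M₀ v) + ε := by
      have hsq : (∫ x, ∫ v, (h 0 x v) ^ 2 * M₀ v) + ε ^ 2 ≤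
          (Real.sqrt (∫ x, ∫ v, (h 0 x v) ^ 2 * M₀ v) + ε) ^ 2 := by
        nlinarith [Real.sq_sqrt (hEhnn 0), Real.sqrt_nonneg
          (∫ x, ∫ v, (h 0 x v) ^ 2 * M₀ v), hε.le]
      calc Real.sqrt ((∫ x, ∫ v, (h 0 x v) ^ 2 * M₀ v) + ε ^ 2)
          ≤ Real.sqrt ((Real.sqrt (∫ x, ∫ v, (h 0 x v) ^ 2 * M₀ v) + ε) ^ 2) :=
            Real.sqrt_le_sqrt hsq
        _ = Real.sqrt (∫ x, ∫ v, (h 0 x v) ^ 2 * M₀ v) + ε := by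
            rw [Real.sqrt_sq (by positivity)]
    linarith
  exact le_of_forall_pos_le_add main
end

section
/- Linear growth of the first sensitivity with respect to the temperature of the Maxwellian: let p be a classical solution of ∂_t p + √T* v ∂_x p = L₁ p such that ∂_t p is also a classical solution of the same equation, with both p and ∂_t p satisfying the energy hypotheses, and let q be a classical solution, satisfying the energy hypotheses, of ∂_t q + √T* v ∂_x q = L₁ q − γ v ∂_x p, where γ ∈ ℝ satisfies |γ/√T*| ≤ C. Then for all t ≥ 0, ‖q(t)‖ ≤ ‖q(0)‖ + C (‖p_i‖ + ‖∂_t p_i‖) t, where p_i = p(0,·,·) and ∂_t p_i = ∂_t p(0,·,·); in particular ‖q(t)‖ grows at most linearly in time. -/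
open MeasureTheory Real

private lemma young_abs (a b ε : ℝ) (hε : 0 < ε) : |a * b| ≤ ε/2 * a^2 + 1/(2*ε) * b^2 := by
  have h := sq_nonneg (ε * |a| - |b|)
  have h2 : |a * b| = |a| * |b| := abs_mul a b
  have ha := abs_nonneg a
  have hb := abs_nonneg b
  have e1 : |a|^2 = a^2 := sq_abs a
  have e2 : |b|^2 = b^2 := sq_abs b
  have hnum : 0 ≤ ε^2*a^2 + b^2 - 2*ε*(|a| * |b|) := by nlinarith
  have hdiv := div_nonneg hnum (le_of_lt (by positivity : (0:ℝ) < 2*ε))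
  have heq : (ε^2*a^2 + b^2 - 2*ε*(|a| * |b|))/(2*ε) = ε/2*a^2 + 1/(2*ε)*b^2 - |a| * |b| := by
    field_simp
  rw [h2]; linarith [heq ▸ hdiv]

private lemma int_mul_weight {f g W : ℝ → ℝ} (hW : ∀ v, 0 ≤ W v)
    (hf : Integrable fun v => f v^2 * W v) (hg : Integrable fun v => g v^2 * W v)
    (hm : AEStronglyMeasurable (fun v => f v * g v * W v) volume) :
    Integrable fun v => f v * g v * W v := by
  refine Integrable.mono' (g := fun v => f v^2 * W v + g v^2 * W v) (hf.add hg) hm ?_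
  filter_upwards with v
  have h1 : |f v * g v| ≤ f v ^2 + g v^2 := by nlinarith [sq_nonneg (|f v| - |g v|), abs_mul (f v) (g v), sq_abs (f v), sq_abs (g v), abs_nonneg (f v), abs_nonneg (g v), abs_nonneg (f v * g v)]
  have : ‖f v * g v * W v‖ = |f v * g v| * W v := by
    rw [Real.norm_eq_abs, abs_mul, abs_of_nonneg (hW v)]
  rw [this]
  calc |f v * g v| * W v ≤ (f v^2 + g v^2) * W v := by
        exact mul_le_mul_of_nonneg_right h1 (hW v)
    _ = f v^2 * W v + g v^2 * W v := by ring

private lemma cs_weighted {f g W : ℝ → ℝ} (hW : ∀ v, 0 ≤ W v)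
    (hf : Integrable fun v => f v^2 * W v) (hg : Integrable fun v => g v^2 * W v)
    (hm : AEStronglyMeasurable (fun v => f v * g v * W v) volume) :
    ∫ v, |f v * g v * W v| ≤
      Real.sqrt (∫ v, f v^2 * W v) * Real.sqrt (∫ v, g v^2 * W v) := by
  have hfg := int_mul_weight hW hf hg hm
  set X := Real.sqrt (∫ v, f v^2 * W v) with hXdef
  set Y := Real.sqrt (∫ v, g v^2 * W v) with hYdef
  have hXnn : 0 ≤ X := Real.sqrt_nonneg _
  have hYnn : 0 ≤ Y := Real.sqrt_nonneg _
  have hfnn : 0 ≤ ∫ v, f v^2 * W v := integral_nonneg fun v => mul_nonneg (sq_nonneg _) (hW v)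
  have hgnn : 0 ≤ ∫ v, g v^2 * W v := integral_nonneg fun v => mul_nonneg (sq_nonneg _) (hW v)
  have hX2 : ∫ v, f v^2 * W v = X^2 := (Real.sq_sqrt hfnn).symm
  have hY2 : ∫ v, g v^2 * W v = Y^2 := (Real.sq_sqrt hgnn).symm
  have key : ∀ ε : ℝ, 0 < ε → (∫ v, |f v * g v * W v|) ≤ ε/2 * X^2 + 1/(2*ε) * Y^2 := by
    intro ε hε
    have hRint : Integrable (fun v => ε/2 * (f v^2 * W v) + 1/(2*ε) * (g v^2 * W v)) :=
      (hf.const_mul _).add (hg.const_mul _)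
    have := integral_mono hfg.abs hRint (fun v => by
      have : |f v * g v * W v| = |f v * g v| * W v := by
        rw [abs_mul, abs_of_nonneg (hW v)]
      rw [this]
      calc |f v * g v| * W v ≤ (ε/2 * (f v)^2 + 1/(2*ε) * (g v)^2) * W v :=
            mul_le_mul_of_nonneg_right (young_abs _ _ _ hε) (hW v)
        _ = ε/2 * (f v^2 * W v) + 1/(2*ε) * (g v^2 * W v) := by ring)
    calc (∫ v, |f v * g v * W v|) ≤ ∫ v, (ε/2 * (f v^2 * W v) + 1/(2*ε) * (g v^2 * W v)) := this
      _ = ε/2 * (∫ v, f v^2 * W v) + 1/(2*ε) * (∫ v, g v^2 * W v) := by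
          rw [integral_add (hf.const_mul _) (hg.const_mul _), integral_const_mul, integral_const_mul]
      _ = ε/2 * X^2 + 1/(2*ε) * Y^2 := by rw [hX2, hY2]
  rcases eq_or_lt_of_le hXnn with hX0 | hXpos
  · -- X = 0
    apply le_of_forall_pos_le_add
    intro δ hδ
    rcases eq_or_lt_of_le hYnn with hY0 | hYpos
    · have := key 1 one_pos
      rw [← hX0, ← hY0] at this ⊢
      simpa using this.trans (by norm_num; positivity)
    · have := key (Y^2/(2*δ)) (by positivity)
      rw [← hX0] at this ⊢
      calc (∫ v, |f v * g v * W v|) ≤ (Y^2/(2*δ))/2 * 0^2 + 1/(2*(Y^2/(2*δ))) * Y^2 := this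
        _ = δ := by field_simp; ring
        _ ≤ 0 * Y + δ := by norm_num
  · rcases eq_or_lt_of_le hYnn with hY0 | hYpos
    · apply le_of_forall_pos_le_add
      intro δ hδ
      have := key (2*δ/X^2) (by positivity)
      rw [← hY0] at this ⊢
      calc (∫ v, |f v * g v * W v|) ≤ (2*δ/X^2)/2 * X^2 + 1/(2*(2*δ/X^2)) * 0^2 := this
        _ = δ := by field_simp; ring
        _ ≤ X * 0 + δ := by norm_num
    · have := key (Y/X) (by positivity)
      calc (∫ v, |f v * g v * W v|) ≤ (Y/X)/2 * X^2 + 1/(2*(Y/X)) * Y^2 := this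
        _ = X * Y := by field_simp; ring

private lemma int_pow_gauss (n : ℕ) : Integrable (fun v : ℝ => v^n * Real.exp (-(1/2) * v^2)) := by
  simpa [Real.rpow_natCast] using
    integrable_rpow_mul_exp_neg_mul_sq (b := 1/2) (by norm_num) (s := n)
      (by exact_mod_cast neg_one_lt_zero.trans_le (Nat.cast_nonneg n))

private lemma M1_poly_int (K a b c : ℝ) :
    Integrable (fun v : ℝ => (a + b*v + c*v^2)^2 * (K * Real.exp (-v^2/2))) := by
  have h : ∀ (k : ℕ) (c' : ℝ), Integrable fun v : ℝ => c' * (v^k * Real.exp (-(1/2)*v^2)) :=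
    fun k c' => (int_pow_gauss k).const_mul c'
  have hsum := ((((h 0 (K*a^2)).add (h 1 (K*(2*a*b)))).add (h 2 (K*(b^2+2*a*c)))).add
      (h 3 (K*(2*b*c)))).add (h 4 (K*c^2))
  refine hsum.congr ?_
  filter_upwards with v
  have he : Real.exp (-(1/2)*v^2) = Real.exp (-v^2/2) := by congr 1; ring
  simp only [Pi.add_apply, he]; ring

private lemma proj_facts {M : ℝ → ℝ} (hMc : Continuous M) (hMnn : ∀ v, 0 ≤ M v)
    (hMint : ∀ a b c : ℝ, Integrable fun v => (a + b*v + c*v^2)^2 * M v)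
    {φ P : ℝ → ℝ} (hφc : Continuous φ)
    (hrep : ∃ a b c : ℝ, ∀ v, P v = a + b * v + c * v ^ 2)
    (horth : ∀ a b c : ℝ, (∫ v, (φ v - P v) * (a + b * v + c * v ^ 2) * M v) = 0)
    (hφ2 : Integrable fun v => φ v^2 * M v) :
    Integrable (fun v => (φ v * P v - φ v^2) * M v) ∧
    (∫ v, (φ v * P v - φ v^2) * M v) ≤ 0 ∧
    (-∫ v, φ v^2 * M v) ≤ (∫ v, (φ v * P v - φ v^2) * M v) ∧
    Integrable (fun v => (P v - φ v)^2 * M v) ∧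
    (∫ v, (P v - φ v)^2 * M v) ≤ ∫ v, φ v^2 * M v := by
  obtain ⟨a, b, c, hP⟩ := hrep
  obtain rfl : P = fun v => a + b * v + c * v ^ 2 := funext hP
  set P : ℝ → ℝ := fun v => a + b * v + c * v ^ 2 with hPdef
  have hPc : Continuous P := by fun_prop
  have hP2 : Integrable fun v => P v^2 * M v := by
    simpa [hPdef, pow_two] using hMint a b c
  have hφP : Integrable fun v => φ v * P v * M v :=
    int_mul_weight hMnn hφ2 hP2 ((hφc.mul hPc).mul hMc).aestronglyMeasurable
  have horthP : (∫ v, (φ v - P v) * P v * M v) = 0 := horth a b c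
  have hsplit : (∫ v, (φ v - P v) * P v * M v) =
      (∫ v, φ v * P v * M v) - ∫ v, P v^2 * M v := by
    rw [← integral_sub hφP hP2]
    congr 1; funext v; ring
  have hEq1 : (∫ v, φ v * P v * M v) = ∫ v, P v^2 * M v := by
    rw [horthP] at hsplit; linarith
  have hint1 : Integrable fun v => P v^2 * M v - 2 * (φ v * P v * M v) :=
    hP2.sub (hφP.const_mul 2)
  have hsq : Integrable fun v => (P v - φ v)^2 * M v := by
    refine (hint1.add hφ2).congr ?_
    filter_upwards with v
    simp only [Pi.add_apply, Pi.sub_apply]; ring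
  have hsqval : (∫ v, (P v - φ v)^2 * M v) =
      (∫ v, φ v^2 * M v) - ∫ v, P v^2 * M v := by
    have e0 : (∫ v, (P v - φ v)^2 * M v) =
        ∫ v, ((P v^2 * M v - 2 * (φ v * P v * M v)) + φ v^2 * M v) := by
      congr 1; funext v; ring
    rw [e0, integral_add hint1 hφ2, integral_sub hP2 (hφP.const_mul 2),
      integral_const_mul, hEq1]
    ring
  have hsqnn : 0 ≤ ∫ v, (P v - φ v)^2 * M v :=
    integral_nonneg fun v => mul_nonneg (sq_nonneg _) (hMnn v)
  have hP2nn : 0 ≤ ∫ v, P v^2 * M v :=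
    integral_nonneg fun v => mul_nonneg (sq_nonneg _) (hMnn v)
  have hmain_int : Integrable (fun v => (φ v * P v - φ v^2) * M v) := by
    refine (hφP.sub hφ2).congr ?_
    filter_upwards with v
    simp only [Pi.sub_apply]; ring
  have hmain_val : (∫ v, (φ v * P v - φ v^2) * M v) =
      (∫ v, P v^2 * M v) - ∫ v, φ v^2 * M v := by
    rw [show (fun v => (φ v * P v - φ v^2) * M v) =
        fun v => φ v * P v * M v - φ v^2 * M v from funext fun v => by ring,
      integral_sub hφP hφ2, hEq1]
  exact ⟨hmain_int, by linarith, by linarith, hsq, by linarith⟩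

private lemma cont_of_pde {Tstar : ℝ}
    {M : ℝ → ℝ} {w wt wx Pw : ℝ → ℝ → ℝ → ℝ} {s : ℝ → ℝ → ℝ} {t : ℝ} (ht : 0 ≤ t)
    (hE : EnergyHyp M (fun v => Real.sqrt Tstar * v) w wt wx)
    (hrep : ∀ x, ∃ a b c : ℝ, ∀ v, Pw t x v = a + b * v + c * v ^ 2)
    (hPDE : ∀ x v, wt t x v + Real.sqrt Tstar * v * wx t x v = Pw t x v - w t x v - s x v)
    (hscont : Continuous fun xv : ℝ × ℝ => s xv.1 xv.2) :
    Continuous (fun xv : ℝ × ℝ => Pw t xv.1 xv.2) ∧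
    Continuous (fun xv : ℝ × ℝ => w t xv.1 xv.2) := by
  have hemb : Continuous (fun xv : ℝ × ℝ => (t, xv.1, xv.2)) := by fun_prop
  have h1 : Continuous (fun xv : ℝ × ℝ => wt t xv.1 xv.2) := hE.cont_wt.comp hemb
  have h2 : Continuous (fun xv : ℝ × ℝ => wx t xv.1 xv.2) := hE.cont_wx.comp hemb
  have hr : Continuous (fun xv : ℝ × ℝ =>
      wt t xv.1 xv.2 + Real.sqrt Tstar * xv.2 * wx t xv.1 xv.2 + s xv.1 xv.2) :=
    (h1.add ((continuous_const.mul continuous_snd).mul h2)).add hscont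
  have hwv : ∀ v, Continuous (fun x => w t x v) := fun v =>
    continuous_iff_continuousAt.2 fun x =>
      (hE.hasDerivAt_x t x v ht).differentiableAt.continuousAt
  have hPval : ∀ x v, Pw t x v = w t x v +
      (wt t x v + Real.sqrt Tstar * v * wx t x v + s x v) := by
    intro x v; have := hPDE x v; linarith
  have hX : ∀ v₀ : ℝ, Continuous (fun x => Pw t x v₀) := by
    intro v₀
    have he : (fun x => Pw t x v₀) = fun x => w t x v₀ +
        (wt t x v₀ + Real.sqrt Tstar * v₀ * wx t x v₀ + s x v₀) := funext fun x => hPval x v₀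
    rw [he]
    exact (hwv v₀).add (hr.comp (by fun_prop : Continuous fun x : ℝ => ((x, v₀) : ℝ × ℝ)))
  have hrep2 : ∀ x v, Pw t x v = Pw t x 0 + ((Pw t x 1 - Pw t x (-1))/2) * v +
      ((Pw t x 1 + Pw t x (-1))/2 - Pw t x 0) * v^2 := by
    intro x v
    obtain ⟨a, b, c, h⟩ := hrep x
    rw [h v, h 0, h 1, h (-1)]; ring
  have hPc : Continuous (fun xv : ℝ × ℝ => Pw t xv.1 xv.2) := by
    have he : (fun xv : ℝ × ℝ => Pw t xv.1 xv.2) = fun xv : ℝ × ℝ =>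
        Pw t xv.1 0 + ((Pw t xv.1 1 - Pw t xv.1 (-1))/2) * xv.2 +
        ((Pw t xv.1 1 + Pw t xv.1 (-1))/2 - Pw t xv.1 0) * xv.2^2 :=
      funext fun xv => hrep2 xv.1 xv.2
    rw [he]
    have c0 : Continuous fun xv : ℝ × ℝ => Pw t xv.1 0 := (hX 0).comp continuous_fst
    have c1 : Continuous fun xv : ℝ × ℝ => Pw t xv.1 1 := (hX 1).comp continuous_fst
    have cm : Continuous fun xv : ℝ × ℝ => Pw t xv.1 (-1) := (hX (-1)).comp continuous_fst
    exact (c0.add (((c1.sub cm).div_const 2).mul continuous_snd)).add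
      ((((c1.add cm).div_const 2).sub c0).mul (continuous_snd.pow 2))
  refine ⟨hPc, ?_⟩
  have he : (fun xv : ℝ × ℝ => w t xv.1 xv.2) = fun xv : ℝ × ℝ =>
      Pw t xv.1 xv.2 - (wt t xv.1 xv.2 + Real.sqrt Tstar * xv.2 * wx t xv.1 xv.2 + s xv.1 xv.2) := by
    funext xv; have := hPval xv.1 xv.2; linarith
  rw [he]
  exact hPc.sub hr

private lemma deriv_bound {Tstar : ℝ}
    {M : ℝ → ℝ} (hMc : Continuous M) (hMnn : ∀ v, 0 ≤ M v)
    (hMint : ∀ a b c : ℝ, Integrable fun v => (a + b*v + c*v^2)^2 * M v)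
    {w wt wx Pw : ℝ → ℝ → ℝ → ℝ} {s : ℝ → ℝ → ℝ} {t : ℝ} (ht : 0 ≤ t)
    (hE : EnergyHyp M (fun v => Real.sqrt Tstar * v) w wt wx)
    (hproj : IsProjection M w Pw)
    (hPDE : ∀ x v, wt t x v + Real.sqrt Tstar * v * wx t x v = Pw t x v - w t x v - s x v)
    (hscont : Continuous fun xv : ℝ × ℝ => s xv.1 xv.2)
    (hsv : ∀ x, Integrable fun v => s x v * w t x v * M v)
    (hsx : Integrable fun x => ∫ v, s x v * w t x v * M v) :
    (∫ x, ∫ v, w t x v * wt t x v * M v) ≤ ∫ x, |∫ v, s x v * w t x v * M v| := by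
  obtain ⟨hPc, hwc⟩ := cont_of_pde ht hE (fun x => hproj.1 t x) hPDE hscont
  have hwxc : Continuous (fun xv : ℝ × ℝ => wx t xv.1 xv.2) :=
    hE.cont_wx.comp (by fun_prop : Continuous (fun xv : ℝ × ℝ => (t, xv.1, xv.2)))
  -- slice facts from the projection
  have hslice := fun x => proj_facts hMc hMnn hMint
    (φ := fun v => w t x v) (P := fun v => Pw t x v)
    (hwc.comp (Continuous.prodMk_right x)) (hproj.1 t x) (fun a b c => hproj.2 t x a b c)
    (hE.int_v t x ht)
  have hDint_v : ∀ x, Integrable fun v => (w t x v * Pw t x v - (w t x v)^2) * M v :=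
    fun x => (hslice x).1
  -- named objects
  set D : ℝ → ℝ := fun x => ∫ v, (w t x v * Pw t x v - (w t x v)^2) * M v with hD
  set Bs : ℝ → ℝ := fun x => ∫ v, s x v * w t x v * M v with hBs
  set g : ℝ → ℝ → ℝ := fun x v => Real.sqrt Tstar * v * w t x v * wx t x v * M v with hg
  set H : ℝ → ℝ := fun x => ∫ v, g x v with hH
  set F : ℝ → ℝ := fun x => ∫ v, w t x v * wt t x v * M v with hF
  have hDle : ∀ x, D x ≤ 0 := fun x => (hslice x).2.1
  have hDge : ∀ x, -(∫ v, (w t x v)^2 * M v) ≤ D x := fun x => (hslice x).2.2.1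
  have hGnn : ∀ x, 0 ≤ ∫ v, (w t x v)^2 * M v :=
    fun x => integral_nonneg fun v => mul_nonneg (sq_nonneg _) (hMnn v)
  have hG : Integrable (fun x => ∫ v, (w t x v)^2 * M v) := hE.int_x t ht
  -- measurability
  have hgc : Continuous (fun xv : ℝ × ℝ => g xv.1 xv.2) := by
    simp only [hg]
    exact ((((continuous_const.mul continuous_snd).mul hwc).mul hwxc).mul (hMc.comp continuous_snd))
  have hSmeas : MeasurableSet {x | Integrable (g x) volume} :=
    measurableSet_integrable hgc.stronglyMeasurable
  set S : Set ℝ := {x | Integrable (g x) volume} with hS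
  have hDm : StronglyMeasurable D := by
    have hc : Continuous (fun xv : ℝ × ℝ =>
        (w t xv.1 xv.2 * Pw t xv.1 xv.2 - (w t xv.1 xv.2)^2) * M xv.2) :=
      ((hwc.mul hPc).sub (hwc.pow 2)).mul (hMc.comp continuous_snd)
    exact hc.stronglyMeasurable.integral_prod_right'
  have hHm : StronglyMeasurable H := hgc.stronglyMeasurable.integral_prod_right'
  set I : ℝ → ℝ := S.indicator (fun x => D x - Bs x) with hI
  have hIint : Integrable I := by
    refine Integrable.mono' (g := fun x => (∫ v, (w t x v)^2 * M v) + |Bs x|)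
      (hG.add hsx.abs)
      ((hDm.aestronglyMeasurable.sub hsx.aestronglyMeasurable).indicator hSmeas) ?_
    filter_upwards with x
    by_cases hx : x ∈ S
    · rw [hI, Set.indicator_of_mem hx, Real.norm_eq_abs]
      have h1 : |D x| ≤ ∫ v, (w t x v)^2 * M v := by
        rw [abs_le]; constructor
        · exact hDge x
        · exact (hDle x).trans (hGnn x)
      calc |D x - Bs x| ≤ |D x| + |Bs x| := abs_sub _ _
        _ ≤ (∫ v, (w t x v)^2 * M v) + |Bs x| := by linarith
    · rw [hI, Set.indicator_of_notMem hx]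
      simp only [norm_zero]
      exact add_nonneg (hGnn x) (abs_nonneg _)
  -- pointwise identity F = I - H
  have hkey : ∀ x v, w t x v * wt t x v * M v =
      ((w t x v * Pw t x v - (w t x v)^2) * M v - s x v * w t x v * M v) - g x v := by
    intro x v
    simp only [hg]
    linear_combination (w t x v * M v) * (hPDE x v)
  have hpoint : ∀ x, F x = I x - H x := by
    intro x
    by_cases hx : x ∈ S
    · have hgint : Integrable (g x) := hx
      have he : (fun v => w t x v * wt t x v * M v) = fun v =>
          ((w t x v * Pw t x v - (w t x v)^2) * M v - s x v * w t x v * M v) - g x v :=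
        funext fun v => hkey x v
      have hAB : Integrable (fun v =>
          (w t x v * Pw t x v - (w t x v)^2) * M v - s x v * w t x v * M v) :=
        (hDint_v x).sub (hsv x)
      have hval : F x = (D x - Bs x) - H x := by
        show (∫ v, w t x v * wt t x v * M v) = (D x - Bs x) - ∫ v, g x v
        rw [he, integral_sub hAB hgint, integral_sub (hDint_v x) (hsv x)]
      rw [hI, Set.indicator_of_mem hx]
      exact hval
    · have hgnint : ¬ Integrable (g x) := hx
      have hne : ¬ Integrable (fun v => w t x v * wt t x v * M v) := by
        intro hcon
        apply hgnint
        have he : g x = fun v =>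
            ((w t x v * Pw t x v - (w t x v)^2) * M v - s x v * w t x v * M v)
              - w t x v * wt t x v * M v := by
          funext v; have := hkey x v; linarith
        rw [he]
        exact ((hDint_v x).sub (hsv x)).sub hcon
      have h1 : F x = 0 := integral_undef hne
      have h2 : H x = 0 := integral_undef hgnint
      rw [h1, h2, hI, Set.indicator_of_notMem hx]
      ring
  by_cases hFint : Integrable F
  · have hHint : Integrable H := by
      have he : H = fun x => I x - F x := funext fun x => by rw [hpoint x]; ring
      rw [he]
      exact hIint.sub hFint
    have hHzero : (∫ x, H x) = 0 := by
      have h0 := hE.transport_zero t ht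
      simpa [hH, hg] using h0
    have he2 : (∫ x, F x) = (∫ x, (I x - H x)) := by
      congr 1; funext x; exact hpoint x
    have hstep : (∫ x, F x) = ∫ x, I x := by
      rw [he2, integral_sub hIint hHint, hHzero, sub_zero]
    show (∫ x, F x) ≤ ∫ x, |Bs x|
    rw [hstep]
    refine integral_mono hIint hsx.abs fun x => ?_
    by_cases hx : x ∈ S
    · rw [hI, Set.indicator_of_mem hx]
      have := hDle x
      calc D x - Bs x ≤ -Bs x := by linarith
        _ ≤ |Bs x| := neg_le_abs _
    · rw [hI, Set.indicator_of_notMem hx]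
      exact abs_nonneg _
  · show (∫ x, F x) ≤ ∫ x, |Bs x|
    rw [integral_undef hFint]
    exact integral_nonneg fun x => abs_nonneg _

private lemma mono_aux {f f' : ℝ → ℝ} (hf : ∀ s, 0 ≤ s → HasDerivAt f (f' s) s)
    (hle : ∀ s, 0 ≤ s → f' s ≤ 0) : ∀ t, 0 ≤ t → f t ≤ f 0 := by
  intro t ht
  have hanti : AntitoneOn f (Set.Icc 0 t) := by
    apply antitoneOn_of_deriv_nonpos (convex_Icc 0 t)
    · intro x hx
      exact (hf x hx.1).continuousAt.continuousWithinAt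
    · rw [interior_Icc]
      intro x hx
      exact (hf x hx.1.le).differentiableAt.differentiableWithinAt
    · rw [interior_Icc]
      intro x hx
      rw [(hf x hx.1.le).deriv]
      exact hle x hx.1.le
  exact hanti ⟨le_refl 0, ht⟩ ⟨ht, le_refl t⟩ ht

private lemma gronwall_sqrt {E e : ℝ → ℝ} {K : ℝ} (hK : 0 ≤ K)
    (hE : ∀ s, 0 ≤ s → HasDerivAt E (e s) s)
    (hEnn : ∀ s, 0 ≤ s → 0 ≤ E s)
    (hbd : ∀ s, 0 ≤ s → e s ≤ 2 * K * Real.sqrt (E s)) :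
    ∀ t, 0 ≤ t → Real.sqrt (E t) ≤ Real.sqrt (E 0) + K * t := by
  intro t ht
  have main : ∀ ε : ℝ, 0 < ε → Real.sqrt (E t + ε) ≤ Real.sqrt (E 0 + ε) + K * t := by
    intro ε hε
    have hd : ∀ s, 0 ≤ s → HasDerivAt (fun u => Real.sqrt (E u + ε) - K * u)
        (e s / (2 * Real.sqrt (E s + ε)) - K) s := by
      intro s hs
      have h1 : HasDerivAt (fun u => E u + ε) (e s) s := (hE s hs).add_const ε
      have hpos : 0 < E s + ε := by linarith [hEnn s hs]
      have h2 : HasDerivAt (fun u => Real.sqrt (E u + ε))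
          (1 / (2 * Real.sqrt (E s + ε)) * e s) s :=
        (Real.hasDerivAt_sqrt hpos.ne').comp s h1
      have he : e s / (2 * Real.sqrt (E s + ε)) - K
          = 1 / (2 * Real.sqrt (E s + ε)) * e s - K * 1 := by ring
      rw [he]
      exact h2.sub ((hasDerivAt_id s).const_mul K)
    have hd' : ∀ s, 0 ≤ s → e s / (2 * Real.sqrt (E s + ε)) - K ≤ 0 := by
      intro s hs
      have hpos : 0 < E s + ε := by linarith [hEnn s hs]
      have hsq : 0 < Real.sqrt (E s + ε) := Real.sqrt_pos.2 hpos
      have h1 : e s ≤ 2 * K * Real.sqrt (E s) := hbd s hs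
      have h2 : Real.sqrt (E s) ≤ Real.sqrt (E s + ε) := Real.sqrt_le_sqrt (by linarith)
      have h3 : e s / (2 * Real.sqrt (E s + ε)) ≤ K := by
        rw [div_le_iff₀ (by positivity)]
        calc e s ≤ 2 * K * Real.sqrt (E s) := h1
          _ ≤ K * (2 * Real.sqrt (E s + ε)) := by nlinarith [Real.sqrt_nonneg (E s)]
      linarith
    have := mono_aux hd hd' t ht
    linarith
  apply le_of_forall_pos_le_add
  intro δ hδ
  have h := main (δ^2) (by positivity)
  have h2 : Real.sqrt (E t) ≤ Real.sqrt (E t + δ^2) := Real.sqrt_le_sqrt (by nlinarith)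
  have hE0 := hEnn 0 le_rfl
  have h3 : Real.sqrt (E 0 + δ^2) ≤ Real.sqrt (E 0) + δ := by
    have hb : E 0 + δ^2 ≤ (Real.sqrt (E 0) + δ)^2 := by
      have := Real.sq_sqrt hE0
      nlinarith [Real.sqrt_nonneg (E 0)]
    calc Real.sqrt (E 0 + δ^2) ≤ Real.sqrt ((Real.sqrt (E 0) + δ)^2) := Real.sqrt_le_sqrt hb
      _ = Real.sqrt (E 0) + δ := Real.sqrt_sq (by positivity)
  linarith

private lemma cs_iterated {M : ℝ → ℝ} (hMc : Continuous M) (hMnn : ∀ v, 0 ≤ M v)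
    {F G : ℝ → ℝ → ℝ}
    (hFc : Continuous fun xv : ℝ × ℝ => F xv.1 xv.2)
    (hGc : Continuous fun xv : ℝ × ℝ => G xv.1 xv.2)
    (hFv : ∀ x, Integrable fun v => (F x v)^2 * M v)
    (hGv : ∀ x, Integrable fun v => (G x v)^2 * M v)
    (hFx : Integrable fun x => ∫ v, (F x v)^2 * M v)
    (hGx : Integrable fun x => ∫ v, (G x v)^2 * M v) :
    (∫ x, |∫ v, F x v * G x v * M v|) ≤
      Real.sqrt (∫ x, ∫ v, (F x v)^2 * M v) * Real.sqrt (∫ x, ∫ v, (G x v)^2 * M v) := by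
  set φ : ℝ → ℝ := fun x => Real.sqrt (∫ v, (F x v)^2 * M v) with hφ
  set ψ : ℝ → ℝ := fun x => Real.sqrt (∫ v, (G x v)^2 * M v) with hψ
  have hφnn : ∀ x, 0 ≤ φ x := fun x => Real.sqrt_nonneg _
  have hψnn : ∀ x, 0 ≤ ψ x := fun x => Real.sqrt_nonneg _
  have hslicecs : ∀ x, |∫ v, F x v * G x v * M v| ≤ φ x * ψ x := by
    intro x
    have hm : AEStronglyMeasurable (fun v => F x v * G x v * M v) volume :=
      (((hFc.comp (Continuous.prodMk_right x)).mul (hGc.comp (Continuous.prodMk_right x))).mul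
        hMc).aestronglyMeasurable
    have h1 := norm_integral_le_integral_norm (μ := volume) (fun v => F x v * G x v * M v)
    simp only [Real.norm_eq_abs] at h1
    exact h1.trans (cs_weighted hMnn (hFv x) (hGv x) hm)
  have hφm : StronglyMeasurable φ := by
    apply Real.continuous_sqrt.comp_stronglyMeasurable
    exact (((hFc.pow 2).mul (hMc.comp continuous_snd)).stronglyMeasurable).integral_prod_right'
  have hψm : StronglyMeasurable ψ := by
    apply Real.continuous_sqrt.comp_stronglyMeasurable
    exact (((hGc.pow 2).mul (hMc.comp continuous_snd)).stronglyMeasurable).integral_prod_right'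
  have hφval : ∀ x, φ x ^ 2 = ∫ v, (F x v)^2 * M v := fun x =>
    Real.sq_sqrt (integral_nonneg fun v => mul_nonneg (sq_nonneg _) (hMnn v))
  have hψval : ∀ x, ψ x ^ 2 = ∫ v, (G x v)^2 * M v := fun x =>
    Real.sq_sqrt (integral_nonneg fun v => mul_nonneg (sq_nonneg _) (hMnn v))
  have hφ2 : Integrable (fun x => φ x ^ 2 * (1:ℝ)) := by
    refine hFx.congr ?_
    filter_upwards with x
    rw [hφval x, mul_one]
  have hψ2 : Integrable (fun x => ψ x ^ 2 * (1:ℝ)) := by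
    refine hGx.congr ?_
    filter_upwards with x
    rw [hψval x, mul_one]
  have hmo : AEStronglyMeasurable (fun x => φ x * ψ x * (1:ℝ)) volume :=
    ((hφm.mul hψm).mul stronglyMeasurable_const).aestronglyMeasurable
  have houter := cs_weighted (W := fun _ => (1:ℝ)) (fun _ => zero_le_one) hφ2 hψ2 hmo
  have hφψint : Integrable (fun x => φ x * ψ x) := by
    have := int_mul_weight (W := fun _ => (1:ℝ)) (fun _ => zero_le_one) hφ2 hψ2 hmo
    refine this.congr ?_
    filter_upwards with x
    rw [mul_one]
  have hinner_m : AEStronglyMeasurable (fun x => |∫ v, F x v * G x v * M v|) volume := by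
    have h0 : StronglyMeasurable (fun x => ∫ v, F x v * G x v * M v) :=
      (((hFc.mul hGc).mul (hMc.comp continuous_snd)).stronglyMeasurable).integral_prod_right'
    exact (continuous_abs.comp_stronglyMeasurable h0).aestronglyMeasurable
  have hinner_int : Integrable (fun x => |∫ v, F x v * G x v * M v|) := by
    refine Integrable.mono' hφψint hinner_m ?_
    filter_upwards with x
    rw [Real.norm_eq_abs, abs_abs]
    exact hslicecs x
  calc (∫ x, |∫ v, F x v * G x v * M v|) ≤ ∫ x, φ x * ψ x :=
        integral_mono hinner_int hφψint hslicecs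
    _ = ∫ x, |φ x * ψ x * (1:ℝ)| := by
        congr 1; funext x
        rw [mul_one, abs_of_nonneg (mul_nonneg (hφnn x) (hψnn x))]
    _ ≤ Real.sqrt (∫ x, φ x ^2 * (1:ℝ)) * Real.sqrt (∫ x, ψ x^2 * (1:ℝ)) := houter
    _ = Real.sqrt (∫ x, ∫ v, (F x v)^2 * M v) * Real.sqrt (∫ x, ∫ v, (G x v)^2 * M v) := by
        have e1 : (∫ x, φ x ^2 * (1:ℝ)) = ∫ x, ∫ v, (F x v)^2 * M v :=
          integral_congr_ae (Filter.Eventually.of_forall fun x => by simp only []; rw [hφval x, mul_one])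
        have e2 : (∫ x, ψ x ^2 * (1:ℝ)) = ∫ x, ∫ v, (G x v)^2 * M v :=
          integral_congr_ae (Filter.Eventually.of_forall fun x => by simp only []; rw [hψval x, mul_one])
        rw [e1, e2]

set_option maxHeartbeats 2000000 in
/-- **Linear growth of the first sensitivity w.r.t. the temperature of the
Maxwellian.**  Fix `ρ* > 0`, `T* > 0` and let `M₁(v) = (ρ*/√(2π)) exp(−v²/2)`.
Let `p` be a classical solution of `∂ₜp + √T* v ∂ₓp = L₁ p` such that
`pt = ∂ₜp` is also a classical solution of the same equation, with both `p`
and `∂ₜp` satisfying the energy hypotheses, and let `q` be a classical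
solution, satisfying the energy hypotheses, of
`∂ₜq + √T* v ∂ₓq = L₁ q − γ v ∂ₓp` where `|γ/√T*| ≤ C`.  Then for all `t ≥ 0`,
`‖q(t)‖ ≤ ‖q(0)‖ + C (‖p_i‖ + ‖∂ₜp_i‖) t`, where `p_i = p(0,·,·)` and
`∂ₜp_i = ∂ₜp(0,·,·)`; in particular `‖q(t)‖` grows at most linearly in time. -/
theorem linear_growth_first_sensitivity_temperature
    (ρstar Tstar : ℝ) (hρ : 0 < ρstar) (hT : 0 < Tstar)
    (M₁ : ℝ → ℝ)
    (hM₁ : ∀ v, M₁ v = ρstar / Real.sqrt (2 * Real.pi) * Real.exp (-v ^ 2 / 2))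
    -- `p` is a classical solution, satisfying the energy hypotheses
    (p pt px Pp : ℝ → ℝ → ℝ → ℝ)
    (hproj : IsProjection M₁ p Pp)
    (hPDE : ∀ t x v, 0 ≤ t →
      pt t x v + Real.sqrt Tstar * v * px t x v = Pp t x v - p t x v)
    (hEp : EnergyHyp M₁ (fun v => Real.sqrt Tstar * v) p pt px)
    -- `∂ₜ p` is also a classical solution, satisfying the energy hypotheses
    (ptt ptx Ppt : ℝ → ℝ → ℝ → ℝ)
    (hprojt : IsProjection M₁ pt Ppt)
    (hPDEt : ∀ t x v, 0 ≤ t →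
      ptt t x v + Real.sqrt Tstar * v * ptx t x v = Ppt t x v - pt t x v)
    (hEt : EnergyHyp M₁ (fun v => Real.sqrt Tstar * v) pt ptt ptx)
    -- the sensitivity `q` solves the equation with source `− γ v ∂ₓ p`, `|γ/√T*| ≤ C`
    (γ C : ℝ) (hγ : |γ / Real.sqrt Tstar| ≤ C)
    (q qt qx Pq : ℝ → ℝ → ℝ → ℝ)
    (hprojq : IsProjection M₁ q Pq)
    (hPDEq : ∀ t x v, 0 ≤ t →
      qt t x v + Real.sqrt Tstar * v * qx t x v =
        Pq t x v - q t x v - γ * v * px t x v)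
    (hEq : EnergyHyp M₁ (fun v => Real.sqrt Tstar * v) q qt qx)
    -- integrability of the cross terms appearing in the energy estimate
    (hcross_v : ∀ t x, 0 ≤ t → Integrable fun v => v * px t x v * q t x v * M₁ v)
    (hcross_x : ∀ t, 0 ≤ t → Integrable fun x => ∫ v, v * px t x v * q t x v * M₁ v) :
    ∀ t : ℝ, 0 ≤ t →
      Real.sqrt (∫ x, ∫ v, (q t x v) ^ 2 * M₁ v) ≤
        Real.sqrt (∫ x, ∫ v, (q 0 x v) ^ 2 * M₁ v) +
          C * (Real.sqrt (∫ x, ∫ v, (p 0 x v) ^ 2 * M₁ v) +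
            Real.sqrt (∫ x, ∫ v, (pt 0 x v) ^ 2 * M₁ v)) * t := by
  have hTs : 0 < Real.sqrt Tstar := Real.sqrt_pos.2 hT
  have hMeq : M₁ = fun v => ρstar / Real.sqrt (2 * Real.pi) * Real.exp (-v ^ 2 / 2) :=
    funext hM₁
  have hMc : Continuous M₁ := by rw [hMeq]; fun_prop
  have hMnn : ∀ v, 0 ≤ M₁ v := fun v => by
    rw [hM₁ v]
    exact mul_nonneg (div_nonneg hρ.le (Real.sqrt_nonneg _)) (Real.exp_pos _).le
  have hMint : ∀ a b c : ℝ, Integrable fun v => (a + b*v + c*v^2)^2 * M₁ v := by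
    intro a b c
    rw [hMeq]
    exact M1_poly_int (ρstar / Real.sqrt (2 * Real.pi)) a b c
  have hC0 : 0 ≤ C := le_trans (abs_nonneg _) hγ
  -- zero source facts
  have hsv0 : ∀ (w : ℝ → ℝ → ℝ → ℝ) (τ x : ℝ),
      Integrable fun v => (fun (_ _ : ℝ) => (0:ℝ)) x v * w τ x v * M₁ v := by
    intro w τ x
    simp only [zero_mul]
    exact integrable_zero _ _ _
  have hsx0 : ∀ (w : ℝ → ℝ → ℝ → ℝ) (τ : ℝ),
      Integrable fun x => ∫ v, (fun (_ _ : ℝ) => (0:ℝ)) x v * w τ x v * M₁ v := by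
    intro w τ
    simp only [zero_mul, integral_zero]
    exact integrable_zero _ _ _
  -- energy decay for p
  have hp_ineq : ∀ τ, 0 ≤ τ → (∫ x, ∫ v, p τ x v * pt τ x v * M₁ v) ≤ 0 := by
    intro τ hτ
    have h := deriv_bound hMc hMnn hMint hτ hEp hproj
      (s := fun (_ _ : ℝ) => (0:ℝ))
      (fun x v => by simpa [sub_zero] using hPDE τ x v hτ)
      continuous_const (hsv0 p τ) (hsx0 p τ)
    simpa using h
  have hpt_ineq : ∀ τ, 0 ≤ τ → (∫ x, ∫ v, pt τ x v * ptt τ x v * M₁ v) ≤ 0 := by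
    intro τ hτ
    have h := deriv_bound hMc hMnn hMint hτ hEt hprojt
      (s := fun (_ _ : ℝ) => (0:ℝ))
      (fun x v => by simpa [sub_zero] using hPDEt τ x v hτ)
      continuous_const (hsv0 pt τ) (hsx0 pt τ)
    simpa using h
  have hEp_mono : ∀ τ, 0 ≤ τ →
      (∫ x, ∫ v, (p τ x v)^2 * M₁ v) ≤ ∫ x, ∫ v, (p 0 x v)^2 * M₁ v :=
    mono_aux (fun τ hτ => hEp.energy_hasDerivAt τ hτ)
      (fun τ hτ => by linarith [hp_ineq τ hτ])
  have hEpt_mono : ∀ τ, 0 ≤ τ →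
      (∫ x, ∫ v, (pt τ x v)^2 * M₁ v) ≤ ∫ x, ∫ v, (pt 0 x v)^2 * M₁ v :=
    mono_aux (fun τ hτ => hEt.energy_hasDerivAt τ hτ)
      (fun τ hτ => by linarith [hpt_ineq τ hτ])
  have hdnn : ∀ (w : ℝ → ℝ → ℝ → ℝ) (τ : ℝ), 0 ≤ ∫ x, ∫ v, (w τ x v)^2 * M₁ v :=
    fun w τ => integral_nonneg fun x =>
      integral_nonneg fun v => mul_nonneg (sq_nonneg _) (hMnn v)
  -- the key bound on the derivative of the q-energy
  set K : ℝ := C * (Real.sqrt (∫ x, ∫ v, (p 0 x v)^2 * M₁ v) +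
      Real.sqrt (∫ x, ∫ v, (pt 0 x v)^2 * M₁ v)) with hK
  have hKnn : 0 ≤ K :=
    mul_nonneg hC0 (add_nonneg (Real.sqrt_nonneg _) (Real.sqrt_nonneg _))
  have hq_ineq : ∀ τ, 0 ≤ τ → 2 * (∫ x, ∫ v, q τ x v * qt τ x v * M₁ v) ≤
      2 * K * Real.sqrt (∫ x, ∫ v, (q τ x v)^2 * M₁ v) := by
    intro τ hτ
    -- joint continuity of the slices
    obtain ⟨hPpc, hpc⟩ := cont_of_pde (s := fun (_ _ : ℝ) => (0:ℝ)) hτ hEp (fun x => hproj.1 τ x)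
      (fun x v => by simpa [sub_zero] using hPDE τ x v hτ) continuous_const
    obtain ⟨hPptc, hptc⟩ := cont_of_pde (s := fun (_ _ : ℝ) => (0:ℝ)) hτ hEt (fun x => hprojt.1 τ x)
      (fun x v => by simpa [sub_zero] using hPDEt τ x v hτ) continuous_const
    have hpxc : Continuous (fun xv : ℝ × ℝ => px τ xv.1 xv.2) :=
      hEp.cont_wx.comp (by fun_prop : Continuous (fun xv : ℝ × ℝ => (τ, xv.1, xv.2)))
    have hsq_cont : Continuous (fun xv : ℝ × ℝ => γ * xv.2 * px τ xv.1 xv.2) :=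
      (continuous_const.mul continuous_snd).mul hpxc
    obtain ⟨hPqc, hqc⟩ := cont_of_pde (s := fun x v => γ * v * px τ x v) hτ hEq
      (fun x => hprojq.1 τ x) (fun x v => hPDEq τ x v hτ) hsq_cont
    -- integrability of the source terms
    have hsvq : ∀ x, Integrable fun v => γ * v * px τ x v * q τ x v * M₁ v := fun x =>
      ((hcross_v τ x hτ).const_mul γ).congr (Filter.Eventually.of_forall fun v => by ring)
    have hsxq : Integrable fun x => ∫ v, γ * v * px τ x v * q τ x v * M₁ v := by
      refine ((hcross_x τ hτ).const_mul γ).congr (Filter.Eventually.of_forall fun x => ?_)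
      show γ * (∫ v, v * px τ x v * q τ x v * M₁ v) = ∫ v, γ * v * px τ x v * q τ x v * M₁ v
      rw [← integral_const_mul]
      exact integral_congr_ae (Filter.Eventually.of_forall fun v => by ring)
    -- main derivative bound with source s = γ v ∂ₓ p
    have hmain := deriv_bound hMc hMnn hMint hτ hEq hprojq
      (s := fun x v => γ * v * px τ x v)
      (fun x v => hPDEq τ x v hτ) hsq_cont hsvq hsxq
    -- pull out γ
    have hrhs : (∫ x, |∫ v, γ * v * px τ x v * q τ x v * M₁ v|) =
        |γ| * ∫ x, |∫ v, v * px τ x v * q τ x v * M₁ v| := by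
      rw [← integral_const_mul]
      congr 1; funext x
      rw [← abs_mul, ← integral_const_mul]
      congr 1
      exact integral_congr_ae (Filter.Eventually.of_forall fun v => by ring)
    -- slice projection facts for p
    have hslicep := fun x => proj_facts hMc hMnn hMint
      (φ := fun v => p τ x v) (P := fun v => Pp τ x v)
      (hpc.comp (Continuous.prodMk_right x)) (hproj.1 τ x) (fun a b c => hproj.2 τ x a b c)
      (hEp.int_v τ x hτ)
    have hA2v : ∀ x, Integrable fun v => (Pp τ x v - p τ x v)^2 * M₁ v :=
      fun x => (hslicep x).2.2.2.1
    have hA2le : ∀ x, (∫ v, (Pp τ x v - p τ x v)^2 * M₁ v) ≤ ∫ v, (p τ x v)^2 * M₁ v :=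
      fun x => (hslicep x).2.2.2.2
    have hAc : Continuous (fun xv : ℝ × ℝ => Pp τ xv.1 xv.2 - p τ xv.1 xv.2) := hPpc.sub hpc
    have hA2m : StronglyMeasurable (fun x => ∫ v, (Pp τ x v - p τ x v)^2 * M₁ v) :=
      (((hAc.pow 2).mul (hMc.comp continuous_snd)).stronglyMeasurable).integral_prod_right'
    have hA2nn : ∀ x, 0 ≤ ∫ v, (Pp τ x v - p τ x v)^2 * M₁ v :=
      fun x => integral_nonneg fun v => mul_nonneg (sq_nonneg _) (hMnn v)
    have hA2x : Integrable fun x => ∫ v, (Pp τ x v - p τ x v)^2 * M₁ v := by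
      refine Integrable.mono' (hEp.int_x τ hτ) hA2m.aestronglyMeasurable ?_
      filter_upwards with x
      rw [Real.norm_eq_abs, abs_of_nonneg (hA2nn x)]
      exact hA2le x
    -- integrability of u = Pp - p - pt slices
    have hpt2v : ∀ x, Integrable fun v => (pt τ x v)^2 * M₁ v := fun x => hEt.int_v τ x hτ
    have hcrossv : ∀ x, Integrable fun v => (Pp τ x v - p τ x v) * pt τ x v * M₁ v := by
      intro x
      refine int_mul_weight hMnn (hA2v x) (hpt2v x) ?_
      exact (((hAc.comp (Continuous.prodMk_right x)).mul
        (hptc.comp (Continuous.prodMk_right x))).mul hMc).aestronglyMeasurable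
    have huv : ∀ x, Integrable fun v => (Pp τ x v - p τ x v - pt τ x v)^2 * M₁ v := by
      intro x
      refine (((hA2v x).sub ((hcrossv x).const_mul 2)).add (hpt2v x)).congr ?_
      filter_upwards with v
      simp only [Pi.add_apply, Pi.sub_apply]; ring
    have huvval : ∀ x, (∫ v, (Pp τ x v - p τ x v - pt τ x v)^2 * M₁ v) =
        ((∫ v, (Pp τ x v - p τ x v)^2 * M₁ v)
          - 2 * ∫ v, (Pp τ x v - p τ x v) * pt τ x v * M₁ v)
          + ∫ v, (pt τ x v)^2 * M₁ v := by
      intro x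
      have e0 : (∫ v, (Pp τ x v - p τ x v - pt τ x v)^2 * M₁ v) =
          ∫ v, (((Pp τ x v - p τ x v)^2 * M₁ v
            - 2 * ((Pp τ x v - p τ x v) * pt τ x v * M₁ v)) + (pt τ x v)^2 * M₁ v) := by
        congr 1; funext v; ring
      have hD1 : Integrable fun v => (Pp τ x v - p τ x v)^2 * M₁ v
          - 2 * ((Pp τ x v - p τ x v) * pt τ x v * M₁ v) :=
        (hA2v x).sub ((hcrossv x).const_mul 2)
      rw [e0, integral_add hD1 (hpt2v x),
        integral_sub (hA2v x) ((hcrossv x).const_mul 2), integral_const_mul]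
    have hum : StronglyMeasurable
        (fun x => ∫ v, (Pp τ x v - p τ x v - pt τ x v)^2 * M₁ v) :=
      ((((hAc.sub hptc).pow 2).mul
        (hMc.comp continuous_snd)).stronglyMeasurable).integral_prod_right'
    have hunn : ∀ x, 0 ≤ ∫ v, (Pp τ x v - p τ x v - pt τ x v)^2 * M₁ v :=
      fun x => integral_nonneg fun v => mul_nonneg (sq_nonneg _) (hMnn v)
    have hubnd : ∀ x, (∫ v, (Pp τ x v - p τ x v - pt τ x v)^2 * M₁ v) ≤
        2 * (∫ v, (p τ x v)^2 * M₁ v) + 2 * ∫ v, (pt τ x v)^2 * M₁ v := by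
      intro x
      have hint2 : Integrable fun v =>
          (2 * (Pp τ x v - p τ x v)^2 + 2 * (pt τ x v)^2) * M₁ v := by
        refine (((hA2v x).const_mul 2).add ((hpt2v x).const_mul 2)).congr ?_
        filter_upwards with v
        simp only [Pi.add_apply]; ring
      have h1 : (∫ v, (Pp τ x v - p τ x v - pt τ x v)^2 * M₁ v) ≤
          ∫ v, (2 * (Pp τ x v - p τ x v)^2 + 2 * (pt τ x v)^2) * M₁ v := by
        refine integral_mono (huv x) hint2 fun v => ?_
        refine mul_le_mul_of_nonneg_right ?_ (hMnn v)
        nlinarith [sq_nonneg (Pp τ x v - p τ x v + pt τ x v)]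
      have h2 : (∫ v, (2 * (Pp τ x v - p τ x v)^2 + 2 * (pt τ x v)^2) * M₁ v) =
          2 * (∫ v, (Pp τ x v - p τ x v)^2 * M₁ v) + 2 * ∫ v, (pt τ x v)^2 * M₁ v := by
        have e0 : (fun v => (2 * (Pp τ x v - p τ x v)^2 + 2 * (pt τ x v)^2) * M₁ v) =
            fun v => 2 * ((Pp τ x v - p τ x v)^2 * M₁ v) + 2 * ((pt τ x v)^2 * M₁ v) := by
          funext v; ring
        rw [e0, integral_add ((hA2v x).const_mul 2) ((hpt2v x).const_mul 2),
          integral_const_mul, integral_const_mul]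
      have h3 := hA2le x
      linarith
    have hux : Integrable (fun x => ∫ v, (Pp τ x v - p τ x v - pt τ x v)^2 * M₁ v) := by
      refine Integrable.mono'
        (((hEp.int_x τ hτ).const_mul 2).add ((hEt.int_x τ hτ).const_mul 2))
        hum.aestronglyMeasurable ?_
      filter_upwards with x
      rw [Real.norm_eq_abs, abs_of_nonneg (hunn x)]
      exact hubnd x
    -- pointwise identity (v px)² M = (1/T) u² M
    have hpw : ∀ x v, (v * px τ x v)^2 * M₁ v =
        (1/Tstar) * ((Pp τ x v - p τ x v - pt τ x v)^2 * M₁ v) := by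
      intro x v
      have hpde := hPDE τ x v hτ
      have hid : Real.sqrt Tstar * (v * px τ x v) = Pp τ x v - p τ x v - pt τ x v := by
        linarith
      have hTsq : Real.sqrt Tstar ^ 2 = Tstar := Real.sq_sqrt hT.le
      have h2 : (Pp τ x v - p τ x v - pt τ x v)^2 = Tstar * (v * px τ x v)^2 := by
        rw [← hid, mul_pow, hTsq]
      rw [h2]; field_simp
    have hpwint : ∀ x, (∫ v, (v * px τ x v)^2 * M₁ v) =
        (1/Tstar) * ∫ v, (Pp τ x v - p τ x v - pt τ x v)^2 * M₁ v := by
      intro x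
      rw [← integral_const_mul]
      exact integral_congr_ae (Filter.Eventually.of_forall fun v => hpw x v)
    -- Cauchy–Schwarz for the cross term
    have hcs := cs_iterated hMc hMnn
      (F := fun x v => v * px τ x v) (G := fun x v => q τ x v)
      (continuous_snd.mul hpxc) hqc ?_ (fun x => hEq.int_v τ x hτ) ?_ (hEq.int_x τ hτ)
    rotate_left
    · -- hFv : v-integrability of (v px)² M
      intro x
      exact (((huv x).const_mul (1/Tstar)).congr
        (Filter.Eventually.of_forall fun v => (hpw x v).symm))
    · -- hFx : x-integrability of ∫ (v px)² M
      exact ((hux.const_mul (1/Tstar)).congr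
        (Filter.Eventually.of_forall fun x => (hpwint x).symm))
    -- x-integrability of the A·pt cross term and its Cauchy–Schwarz bound
    have hcrossm : StronglyMeasurable
        (fun x => ∫ v, (Pp τ x v - p τ x v) * pt τ x v * M₁ v) :=
      (((hAc.mul hptc).mul (hMc.comp continuous_snd)).stronglyMeasurable).integral_prod_right'
    have hcrossx : Integrable (fun x => ∫ v, (Pp τ x v - p τ x v) * pt τ x v * M₁ v) := by
      refine Integrable.mono' (hA2x.add (hEt.int_x τ hτ)) hcrossm.aestronglyMeasurable ?_
      filter_upwards with x
      rw [Real.norm_eq_abs]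
      have h1 := norm_integral_le_integral_norm (μ := volume)
        (fun v => (Pp τ x v - p τ x v) * pt τ x v * M₁ v)
      simp only [Real.norm_eq_abs] at h1
      have hint2 : Integrable fun v =>
          (Pp τ x v - p τ x v)^2 * M₁ v + (pt τ x v)^2 * M₁ v := (hA2v x).add (hpt2v x)
      have h2 : (∫ v, |(Pp τ x v - p τ x v) * pt τ x v * M₁ v|) ≤
          ∫ v, ((Pp τ x v - p τ x v)^2 * M₁ v + (pt τ x v)^2 * M₁ v) := by
        refine integral_mono (int_mul_weight hMnn (hA2v x) (hpt2v x)
          ((((hAc.comp (Continuous.prodMk_right x)).mul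
            (hptc.comp (Continuous.prodMk_right x))).mul hMc).aestronglyMeasurable)).abs hint2
          fun v => ?_
        have hb : |(Pp τ x v - p τ x v) * pt τ x v| ≤
            (Pp τ x v - p τ x v)^2 + (pt τ x v)^2 := by
          nlinarith [sq_nonneg (|Pp τ x v - p τ x v| - |pt τ x v|),
            abs_mul (Pp τ x v - p τ x v) (pt τ x v), sq_abs (Pp τ x v - p τ x v),
            sq_abs (pt τ x v), abs_nonneg (Pp τ x v - p τ x v), abs_nonneg (pt τ x v)]
        calc |(Pp τ x v - p τ x v) * pt τ x v * M₁ v|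
            = |(Pp τ x v - p τ x v) * pt τ x v| * M₁ v := by
              rw [abs_mul, abs_of_nonneg (hMnn v)]
          _ ≤ ((Pp τ x v - p τ x v)^2 + (pt τ x v)^2) * M₁ v :=
              mul_le_mul_of_nonneg_right hb (hMnn v)
          _ = (Pp τ x v - p τ x v)^2 * M₁ v + (pt τ x v)^2 * M₁ v := by ring
      have h3 : (∫ v, ((Pp τ x v - p τ x v)^2 * M₁ v + (pt τ x v)^2 * M₁ v)) =
          (∫ v, (Pp τ x v - p τ x v)^2 * M₁ v) + ∫ v, (pt τ x v)^2 * M₁ v :=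
        integral_add (hA2v x) (hpt2v x)
      calc |∫ v, (Pp τ x v - p τ x v) * pt τ x v * M₁ v| ≤
            ∫ v, |(Pp τ x v - p τ x v) * pt τ x v * M₁ v| := h1
        _ ≤ (∫ v, (Pp τ x v - p τ x v)^2 * M₁ v) + ∫ v, (pt τ x v)^2 * M₁ v := by
            rw [← h3]; exact h2
    have hcsApt := cs_iterated hMc hMnn
      (F := fun x v => Pp τ x v - p τ x v) (G := fun x v => pt τ x v)
      hAc hptc hA2v hpt2v hA2x (hEt.int_x τ hτ)
    -- splitting the double integral of u²
    have hu_split : (∫ x, ∫ v, (Pp τ x v - p τ x v - pt τ x v)^2 * M₁ v) =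
        ((∫ x, ∫ v, (Pp τ x v - p τ x v)^2 * M₁ v)
          - 2 * ∫ x, ∫ v, (Pp τ x v - p τ x v) * pt τ x v * M₁ v)
          + ∫ x, ∫ v, (pt τ x v)^2 * M₁ v := by
      have e0 : (∫ x, ∫ v, (Pp τ x v - p τ x v - pt τ x v)^2 * M₁ v) =
          ∫ x, (((∫ v, (Pp τ x v - p τ x v)^2 * M₁ v)
            - 2 * ∫ v, (Pp τ x v - p τ x v) * pt τ x v * M₁ v)
            + ∫ v, (pt τ x v)^2 * M₁ v) :=
        integral_congr_ae (Filter.Eventually.of_forall fun x => huvval x)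
      have hD2 : Integrable fun x => (∫ v, (Pp τ x v - p τ x v)^2 * M₁ v)
          - 2 * ∫ v, (Pp τ x v - p τ x v) * pt τ x v * M₁ v :=
        hA2x.sub (hcrossx.const_mul 2)
      rw [e0, integral_add hD2 (hEt.int_x τ hτ),
        integral_sub hA2x (hcrossx.const_mul 2), integral_const_mul]
    -- bounding the double integral of u²
    set a : ℝ := ∫ x, ∫ v, (Pp τ x v - p τ x v)^2 * M₁ v with ha
    set b : ℝ := ∫ x, ∫ v, (pt τ x v)^2 * M₁ v with hb
    have hann : 0 ≤ a := integral_nonneg fun x => hA2nn x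
    have hbnn : 0 ≤ b := integral_nonneg fun x =>
      integral_nonneg fun v => mul_nonneg (sq_nonneg _) (hMnn v)
    have hIx : |∫ x, ∫ v, (Pp τ x v - p τ x v) * pt τ x v * M₁ v| ≤
        Real.sqrt a * Real.sqrt b := by
      have h1 := norm_integral_le_integral_norm (μ := volume)
        (fun x => ∫ v, (Pp τ x v - p τ x v) * pt τ x v * M₁ v)
      simp only [Real.norm_eq_abs] at h1
      exact h1.trans hcsApt
    have hu_bnd : (∫ x, ∫ v, (Pp τ x v - p τ x v - pt τ x v)^2 * M₁ v) ≤
        (Real.sqrt a + Real.sqrt b)^2 := by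
      rw [hu_split]
      have h2 : Real.sqrt a ^ 2 = a := Real.sq_sqrt hann
      have h3 : Real.sqrt b ^ 2 = b := Real.sq_sqrt hbnn
      have h4 := abs_le.1 hIx
      nlinarith [h4.1, h4.2]
    -- bound on √Vp
    have hVp_eq : (∫ x, ∫ v, (v * px τ x v)^2 * M₁ v) =
        (1/Tstar) * ∫ x, ∫ v, (Pp τ x v - p τ x v - pt τ x v)^2 * M₁ v := by
      rw [← integral_const_mul]
      exact integral_congr_ae (Filter.Eventually.of_forall fun x => hpwint x)
    have hsqrtTinv : Real.sqrt (1/Tstar) = 1 / Real.sqrt Tstar := by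
      rw [one_div, one_div, Real.sqrt_inv]
    have ha_le : a ≤ ∫ x, ∫ v, (p τ x v)^2 * M₁ v :=
      integral_mono hA2x (hEp.int_x τ hτ) fun x => hA2le x
    have hsa : Real.sqrt a ≤ Real.sqrt (∫ x, ∫ v, (p 0 x v)^2 * M₁ v) :=
      Real.sqrt_le_sqrt (ha_le.trans (hEp_mono τ hτ))
    have hsb : Real.sqrt b ≤ Real.sqrt (∫ x, ∫ v, (pt 0 x v)^2 * M₁ v) :=
      Real.sqrt_le_sqrt (hEpt_mono τ hτ)
    have hVp_le : Real.sqrt (∫ x, ∫ v, (v * px τ x v)^2 * M₁ v) ≤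
        (1 / Real.sqrt Tstar) *
          (Real.sqrt (∫ x, ∫ v, (p 0 x v)^2 * M₁ v)
            + Real.sqrt (∫ x, ∫ v, (pt 0 x v)^2 * M₁ v)) := by
      rw [hVp_eq, Real.sqrt_mul (by positivity) _, hsqrtTinv]
      refine mul_le_mul_of_nonneg_left ?_ (by positivity)
      calc Real.sqrt (∫ x, ∫ v, (Pp τ x v - p τ x v - pt τ x v)^2 * M₁ v)
          ≤ Real.sqrt ((Real.sqrt a + Real.sqrt b)^2) := Real.sqrt_le_sqrt hu_bnd
        _ = Real.sqrt a + Real.sqrt b := Real.sqrt_sq (by positivity)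
        _ ≤ _ := add_le_add hsa hsb
    -- assembling everything
    have hmain' : (∫ x, ∫ v, q τ x v * qt τ x v * M₁ v) ≤
        ∫ x, |∫ v, γ * v * px τ x v * q τ x v * M₁ v| := hmain
    rw [hrhs] at hmain'
    have hEqnn : 0 ≤ ∫ x, ∫ v, (q τ x v)^2 * M₁ v := hdnn q τ
    have hsqEq : 0 ≤ Real.sqrt (∫ x, ∫ v, (q τ x v)^2 * M₁ v) := Real.sqrt_nonneg _
    have hBnn : 0 ≤ ∫ x, |∫ v, v * px τ x v * q τ x v * M₁ v| :=
      integral_nonneg fun x => abs_nonneg _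
    have hγT : |γ| * (1 / Real.sqrt Tstar) ≤ C := by
      have : |γ / Real.sqrt Tstar| = |γ| * (1 / Real.sqrt Tstar) := by
        rw [abs_div, abs_of_nonneg hTs.le, div_eq_mul_one_div]
      linarith [hγ, this ▸ hγ]
    have hchain : (∫ x, ∫ v, q τ x v * qt τ x v * M₁ v) ≤
        K * Real.sqrt (∫ x, ∫ v, (q τ x v)^2 * M₁ v) := by
      calc (∫ x, ∫ v, q τ x v * qt τ x v * M₁ v)
          ≤ |γ| * ∫ x, |∫ v, v * px τ x v * q τ x v * M₁ v| := hmain'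
        _ ≤ |γ| * (Real.sqrt (∫ x, ∫ v, (v * px τ x v)^2 * M₁ v) *
              Real.sqrt (∫ x, ∫ v, (q τ x v)^2 * M₁ v)) :=
            mul_le_mul_of_nonneg_left hcs (abs_nonneg γ)
        _ ≤ |γ| * (((1 / Real.sqrt Tstar) *
              (Real.sqrt (∫ x, ∫ v, (p 0 x v)^2 * M₁ v)
                + Real.sqrt (∫ x, ∫ v, (pt 0 x v)^2 * M₁ v))) *
              Real.sqrt (∫ x, ∫ v, (q τ x v)^2 * M₁ v)) := by
            refine mul_le_mul_of_nonneg_left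
              (mul_le_mul_of_nonneg_right hVp_le hsqEq) (abs_nonneg γ)
        _ = (|γ| * (1 / Real.sqrt Tstar)) *
              ((Real.sqrt (∫ x, ∫ v, (p 0 x v)^2 * M₁ v)
                + Real.sqrt (∫ x, ∫ v, (pt 0 x v)^2 * M₁ v)) *
              Real.sqrt (∫ x, ∫ v, (q τ x v)^2 * M₁ v)) := by ring
        _ ≤ C * ((Real.sqrt (∫ x, ∫ v, (p 0 x v)^2 * M₁ v)
                + Real.sqrt (∫ x, ∫ v, (pt 0 x v)^2 * M₁ v)) *
              Real.sqrt (∫ x, ∫ v, (q τ x v)^2 * M₁ v)) := by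
            refine mul_le_mul_of_nonneg_right hγT ?_
            positivity
        _ = K * Real.sqrt (∫ x, ∫ v, (q τ x v)^2 * M₁ v) := by rw [hK]; ring
    linarith
  -- conclude by the Grönwall-type lemma
  intro t ht
  exact gronwall_sqrt hKnn (fun τ hτ => hEq.energy_hasDerivAt τ hτ)
    (fun τ _ => hdnn q τ) hq_ineq t ht
end

section
/- Polynomial growth of higher-order sensitivities with respect to the temperature of the Maxwellian: fix n ≥ 0, constants τ_0 = √T* > 0 and τ_1, …, τ_{n+1} ∈ ℝ with |τ_j| ≤ C and |τ_j/√T*| ≤ C for 1 ≤ j ≤ n+1, and functions q⁽⁰⁾, …, q⁽ⁿ⁺¹⁾ on [0,∞) × ℝ × ℝ such that for each k ≤ n+1, q⁽ᵏ⁾ is a classical solution of ∂_t q⁽ᵏ⁾ + Σ_{j=0}^{k} binom(k,j) τ_{k−j} v ∂_x q⁽ʲ⁾ = L₁ q⁽ᵏ⁾, with each q⁽ᵏ⁾ and ∂_t q⁽ᵏ⁾ (k ≤ n) satisfying the energy hypotheses. Suppose moreover that for each k ≤ n there is a constant B_k with ‖q⁽ᵏ⁾(t)‖ ≤ B_k (1+t)^k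 and ‖∂_t q⁽ᵏ⁾(t)‖ ≤ B_k (1+t)^k for all t ≥ 0. Then there exists a constant C_{n+1}, depending only on C, n, T*, the B_k, and ‖q⁽ⁿ⁺¹⁾(0)‖, such that ‖q⁽ⁿ⁺¹⁾(t)‖ ≤ C_{n+1} (1+t)^{n+1} for all t ≥ 0. -/
/-!
Let `E(t) = ‖q⁽ⁿ⁺¹⁾(t)‖²`. Splitting off its principal part, the equation for `q⁽ⁿ⁺¹⁾` reads
`∂ₜq + √T* v ∂ₓq = L₁q - S`, where `S` collects the transport terms `v ∂ₓq⁽ʲ⁾`, `j ≤ n`.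
The coefficient matrix `binom(l,i) τ_{l-i}` of the lower-order transport terms is triangular
with diagonal `τ₀ = √T* ≠ 0`, so `S` is a fixed linear combination of the full lower-order
transport terms, and these equal `L₁q⁽ˡ⁾ - ∂ₜq⁽ˡ⁾` by the lower-order equations. As `Π₁` is an
orthogonal projection, `‖L₁f‖ ≤ ‖f‖`, hence `‖S(t)‖ ≤ K (1+t)ⁿ`. Testing the top-order equation
against `q`, the transport term integrates to zero and `⟨q, L₁q⟩ = -‖L₁q‖² ≤ 0`, so
`E' ≤ 2‖q‖‖S‖ ≤ 2K(1+t)ⁿ √E`; integrating `(√E)' ≤ K(1+t)ⁿ` gives the polynomial bound.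
-/

open MeasureTheory Real

open Finset

section WeightedL2

variable {α : Type*} [MeasurableSpace α] {μ : Measure α} {f g p W : α → ℝ}

theorem integrable_mul_mul_of_sq (hW : 0 ≤ W)
    (hm : AEStronglyMeasurable (fun a => f a * g a * W a) μ)
    (hf : Integrable (fun a => f a ^ 2 * W a) μ) (hg : Integrable (fun a => g a ^ 2 * W a) μ) :
    Integrable (fun a => f a * g a * W a) μ := by
  refine ((hf.add hg).div_const 2).mono' hm (.of_forall fun a => ?_)
  rw [Real.norm_eq_abs, abs_mul, abs_mul, abs_of_nonneg (hW a), Pi.add_apply]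
  have h := mul_nonneg (sq_nonneg (|f a| - |g a|)) (hW a)
  rw [sub_sq, sq_abs, sq_abs] at h
  linarith

theorem integrable_sub_sq_mul (hW : 0 ≤ W)
    (hm : AEStronglyMeasurable (fun a => f a * g a * W a) μ)
    (hf : Integrable (fun a => f a ^ 2 * W a) μ) (hg : Integrable (fun a => g a ^ 2 * W a) μ) :
    Integrable (fun a => (f a - g a) ^ 2 * W a) μ := by
  have hfg := (integrable_mul_mul_of_sq hW hm hf hg).const_mul 2
  refine ((hf.sub hfg).add hg).congr (.of_forall fun a => ?_)
  simp only [Pi.add_apply, Pi.sub_apply]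
  ring

theorem abs_integral_mul_mul_le (hW : 0 ≤ W)
    (hm : AEStronglyMeasurable (fun a => f a * g a * W a) μ)
    (hf : Integrable (fun a => f a ^ 2 * W a) μ) (hg : Integrable (fun a => g a ^ 2 * W a) μ) :
    |∫ a, f a * g a * W a ∂μ| ≤
      √(∫ a, f a ^ 2 * W a ∂μ) * √(∫ a, g a ^ 2 * W a ∂μ) := by
  have hfg := integrable_mul_mul_of_sq hW hm hf hg
  have hquad : ∀ s : ℝ, 0 ≤ (∫ a, g a ^ 2 * W a ∂μ) * (s * s) +
      (2 * ∫ a, f a * g a * W a ∂μ) * s + ∫ a, f a ^ 2 * W a ∂μ := by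
    intro s
    have hexp : ∫ a, (f a + s * g a) ^ 2 * W a ∂μ = (∫ a, g a ^ 2 * W a ∂μ) * (s * s) +
        (2 * ∫ a, f a * g a * W a ∂μ) * s + ∫ a, f a ^ 2 * W a ∂μ := by
      have hsplit : (fun a => (f a + s * g a) ^ 2 * W a) = fun a =>
          f a ^ 2 * W a + (2 * s) * (f a * g a * W a) + (s * s) * (g a ^ 2 * W a) := by
        funext a; ring
      have hfirst : Integrable (fun a => f a ^ 2 * W a + 2 * s * (f a * g a * W a)) μ :=
        hf.add (hfg.const_mul _)
      rw [hsplit, integral_add hfirst (hg.const_mul _), integral_add hf (hfg.const_mul _),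
        integral_const_mul, integral_const_mul]
      ring
    exact hexp ▸ integral_nonneg fun a => mul_nonneg (sq_nonneg _) (hW a)
  have hdisc := discrim_le_zero hquad
  rw [discrim] at hdisc
  rw [← sqrt_mul (integral_nonneg fun a => mul_nonneg (sq_nonneg _) (hW a))]
  exact abs_le_sqrt (by nlinarith)

theorem integrable_sqrt_mul_sqrt {a b : α → ℝ} (ha0 : 0 ≤ a) (hb0 : 0 ≤ b)
    (ha : Integrable a μ) (hb : Integrable b μ) : Integrable (fun x => √(a x) * √(b x)) μ := by
  refine ((ha.add hb).div_const 2).mono'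
    ((continuous_sqrt.comp_aestronglyMeasurable ha.1).mul
      (continuous_sqrt.comp_aestronglyMeasurable hb.1)) (.of_forall fun x => ?_)
  rw [Real.norm_eq_abs, abs_of_nonneg (by positivity), Pi.add_apply]
  nlinarith [sq_nonneg (√(a x) - √(b x)), sq_sqrt (ha0 x), sq_sqrt (hb0 x)]

theorem integral_sqrt_mul_sqrt_le {a b : α → ℝ} (ha0 : 0 ≤ a) (hb0 : 0 ≤ b)
    (ha : Integrable a μ) (hb : Integrable b μ) :
    ∫ x, √(a x) * √(b x) ∂μ ≤ √(∫ x, a x ∂μ) * √(∫ x, b x ∂μ) := by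
  have hsq : ∀ {c : α → ℝ}, 0 ≤ c → (fun x => √(c x) ^ 2 * 1) = c := fun hc =>
    funext fun x => by rw [sq_sqrt (hc x), mul_one]
  have hm : AEStronglyMeasurable (fun x => √(a x) * √(b x) * 1) μ :=
    (integrable_sqrt_mul_sqrt ha0 hb0 ha hb).1.mul aestronglyMeasurable_const
  have h := abs_integral_mul_mul_le (fun _ => zero_le_one) hm
    ((hsq ha0).symm ▸ ha) ((hsq hb0).symm ▸ hb)
  simp only [mul_one, fun x => sq_sqrt (ha0 x), fun x => sq_sqrt (hb0 x)] at h
  exact (le_abs_self _).trans h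

theorem integral_le_sum_mul_integral {ι : Type*} (s : Finset ι) (c : ι → ℝ) {F : α → ℝ}
    {G : ι → α → ℝ} (hF : 0 ≤ F) (hG : ∀ i ∈ s, Integrable (G i) μ)
    (hFG : ∀ a, F a ≤ ∑ i ∈ s, c i * G i a) :
    ∫ a, F a ∂μ ≤ ∑ i ∈ s, c i * ∫ a, G i a ∂μ := by
  have hsum : Integrable (fun a => ∑ i ∈ s, c i * G i a) μ :=
    integrable_finsetSum _ fun i hi => (hG i hi).const_mul _
  calc ∫ a, F a ∂μ ≤ ∫ a, ∑ i ∈ s, c i * G i a ∂μ :=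
        integral_mono_of_nonneg (.of_forall hF) hsum (.of_forall hFG)
    _ = ∑ i ∈ s, c i * ∫ a, G i a ∂μ := by
        rw [integral_finsetSum _ fun i hi => (hG i hi).const_mul _]
        simp only [integral_const_mul]

theorem integral_sq_sum_mul_le {ι : Type*} (s : Finset ι) (c : ι → ℝ) {g : ι → α → ℝ}
    (hW : 0 ≤ W) (hm : AEStronglyMeasurable (fun a => (∑ i ∈ s, c i * g i a) ^ 2 * W a) μ)
    (hg : ∀ i ∈ s, Integrable (fun a => g i a ^ 2 * W a) μ) :
    Integrable (fun a => (∑ i ∈ s, c i * g i a) ^ 2 * W a) μ ∧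
      ∫ a, (∑ i ∈ s, c i * g i a) ^ 2 * W a ∂μ ≤
        ∑ i ∈ s, (#s * c i ^ 2) * ∫ a, g i a ^ 2 * W a ∂μ := by
  have hpt : ∀ a, (∑ i ∈ s, c i * g i a) ^ 2 * W a ≤
      ∑ i ∈ s, (#s * c i ^ 2) * (g i a ^ 2 * W a) := fun a => by
    calc (∑ i ∈ s, c i * g i a) ^ 2 * W a ≤ (#s * ∑ i ∈ s, (c i * g i a) ^ 2) * W a :=
          mul_le_mul_of_nonneg_right (sq_sum_le_card_mul_sum_sq) (hW a)
      _ = ∑ i ∈ s, (#s * c i ^ 2) * (g i a ^ 2 * W a) := by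
          rw [mul_sum, sum_mul]
          exact sum_congr rfl fun i _ => by ring
  have hdom : Integrable (fun a => ∑ i ∈ s, (#s * c i ^ 2) * (g i a ^ 2 * W a)) μ :=
    integrable_finsetSum _ fun i hi => (hg i hi).const_mul _
  refine ⟨hdom.mono' hm (.of_forall fun a => ?_),
    integral_le_sum_mul_integral s _ (fun a => mul_nonneg (sq_nonneg _) (hW a)) hg hpt⟩
  rw [Real.norm_eq_abs, abs_of_nonneg (mul_nonneg (sq_nonneg _) (hW a))]
  exact hpt a

theorem integral_mul_sub_eq_neg_of_orthogonal (hW : 0 ≤ W) (hfm : AEStronglyMeasurable f μ)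
    (hpm : AEStronglyMeasurable p μ) (hWm : AEStronglyMeasurable W μ)
    (hf : Integrable (fun a => f a ^ 2 * W a) μ) (hp : Integrable (fun a => p a ^ 2 * W a) μ)
    (horth : ∫ a, (f a - p a) * p a * W a ∂μ = 0) :
    ∫ a, f a * (p a - f a) * W a ∂μ = -∫ a, (p a - f a) ^ 2 * W a ∂μ := by
  have hres : Integrable (fun a => (p a - f a) ^ 2 * W a) μ :=
    integrable_sub_sq_mul hW ((hpm.mul hfm).mul hWm) hp hf
  have hres' : Integrable (fun a => (f a - p a) ^ 2 * W a) μ :=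
    hres.congr (.of_forall fun a => by ring)
  have hcross : Integrable (fun a => (f a - p a) * p a * W a) μ :=
    integrable_mul_mul_of_sq hW (((hfm.sub hpm).mul hpm).mul hWm) hres' hp
  have hsplit : (fun a => f a * (p a - f a) * W a) =
      fun a => -((p a - f a) ^ 2 * W a) - (f a - p a) * p a * W a := by
    funext a; ring
  have hneg : Integrable (fun a => -((p a - f a) ^ 2 * W a)) μ := hres.neg
  rw [hsplit, integral_sub hneg hcross, integral_neg, horth, sub_zero]

theorem integral_sub_sq_mul_le_of_orthogonal (hW : 0 ≤ W) (hfm : AEStronglyMeasurable f μ)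
    (hpm : AEStronglyMeasurable p μ) (hWm : AEStronglyMeasurable W μ)
    (hf : Integrable (fun a => f a ^ 2 * W a) μ) (hp : Integrable (fun a => p a ^ 2 * W a) μ)
    (horth : ∫ a, (f a - p a) * p a * W a ∂μ = 0) :
    ∫ a, (p a - f a) ^ 2 * W a ∂μ ≤ ∫ a, f a ^ 2 * W a ∂μ := by
  have hres : Integrable (fun a => (p a - f a) ^ 2 * W a) μ :=
    integrable_sub_sq_mul hW ((hpm.mul hfm).mul hWm) hp hf
  have hres' : Integrable (fun a => (f a - p a) ^ 2 * W a) μ :=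
    hres.congr (.of_forall fun a => by ring)
  have hcross : Integrable (fun a => 2 * ((f a - p a) * p a * W a)) μ :=
    (integrable_mul_mul_of_sq hW (((hfm.sub hpm).mul hpm).mul hWm) hres' hp).const_mul 2
  have hsplit : (fun a => f a ^ 2 * W a) =
      fun a => (p a - f a) ^ 2 * W a + 2 * ((f a - p a) * p a * W a) + p a ^ 2 * W a := by
    funext a; ring
  have hfirst : Integrable (fun a => (p a - f a) ^ 2 * W a + 2 * ((f a - p a) * p a * W a)) μ :=
    hres.add hcross
  rw [hsplit, integral_add hfirst hp, integral_add hres hcross, integral_const_mul,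
    horth, mul_zero, add_zero, le_add_iff_nonneg_right]
  exact integral_nonneg fun a => mul_nonneg (sq_nonneg _) (hW a)

theorem integral_mul_residual_sub_le (hW : 0 ≤ W) (hfm : AEStronglyMeasurable f μ)
    (hpm : AEStronglyMeasurable p μ) (hgm : AEStronglyMeasurable g μ)
    (hWm : AEStronglyMeasurable W μ) (hf : Integrable (fun a => f a ^ 2 * W a) μ)
    (hp : Integrable (fun a => p a ^ 2 * W a) μ) (hg : Integrable (fun a => g a ^ 2 * W a) μ)
    (horth : ∫ a, (f a - p a) * p a * W a ∂μ = 0) :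
    Integrable (fun a => f a * (p a - f a - g a) * W a) μ ∧
      ∫ a, f a * (p a - f a - g a) * W a ∂μ ≤
        √(∫ a, f a ^ 2 * W a ∂μ) * √(∫ a, g a ^ 2 * W a ∂μ) ∧
      |∫ a, f a * (p a - f a - g a) * W a ∂μ| ≤
        ∫ a, f a ^ 2 * W a ∂μ + √(∫ a, f a ^ 2 * W a ∂μ) * √(∫ a, g a ^ 2 * W a ∂μ) := by
  have hres : Integrable (fun a => f a * (p a - f a) * W a) μ :=
    integrable_mul_mul_of_sq hW ((hfm.mul (hpm.sub hfm)).mul hWm) hf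
      (integrable_sub_sq_mul hW ((hpm.mul hfm).mul hWm) hp hf)
  have hfg := integrable_mul_mul_of_sq hW ((hfm.mul hgm).mul hWm) hf hg
  have hsplit : (fun a => f a * (p a - f a - g a) * W a) =
      fun a => f a * (p a - f a) * W a - f a * g a * W a := by
    funext a; ring
  have hval : ∫ a, f a * (p a - f a - g a) * W a ∂μ =
      -∫ a, (p a - f a) ^ 2 * W a ∂μ - ∫ a, f a * g a * W a ∂μ := by
    rw [hsplit, integral_sub hres hfg,
      integral_mul_sub_eq_neg_of_orthogonal hW hfm hpm hWm hf hp horth]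
  have hres0 : 0 ≤ ∫ a, (p a - f a) ^ 2 * W a ∂μ :=
    integral_nonneg fun a => mul_nonneg (sq_nonneg _) (hW a)
  have hresle := integral_sub_sq_mul_le_of_orthogonal hW hfm hpm hWm hf hp horth
  have hcs := abs_le.1 (abs_integral_mul_mul_le hW ((hfm.mul hgm).mul hWm) hf hg)
  refine ⟨hsplit ▸ hres.sub hfg, by linarith, abs_le.2 ⟨by linarith, by linarith⟩⟩

theorem integral_residual_sub_sq_mul_le (hW : 0 ≤ W) (hfm : AEStronglyMeasurable f μ)
    (hpm : AEStronglyMeasurable p μ) (hgm : AEStronglyMeasurable g μ)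
    (hWm : AEStronglyMeasurable W μ) (hf : Integrable (fun a => f a ^ 2 * W a) μ)
    (hp : Integrable (fun a => p a ^ 2 * W a) μ) (hg : Integrable (fun a => g a ^ 2 * W a) μ)
    (horth : ∫ a, (f a - p a) * p a * W a ∂μ = 0) :
    Integrable (fun a => (p a - f a - g a) ^ 2 * W a) μ ∧
      ∫ a, (p a - f a - g a) ^ 2 * W a ∂μ ≤
        2 * ∫ a, f a ^ 2 * W a ∂μ + 2 * ∫ a, g a ^ 2 * W a ∂μ := by
  have hres : Integrable (fun a => (p a - f a) ^ 2 * W a) μ :=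
    integrable_sub_sq_mul hW ((hpm.mul hfm).mul hWm) hp hf
  have hdom : Integrable (fun a => 2 * ((p a - f a) ^ 2 * W a) + 2 * (g a ^ 2 * W a)) μ :=
    (hres.const_mul 2).add (hg.const_mul 2)
  refine ⟨integrable_sub_sq_mul hW (((hpm.sub hfm).mul hgm).mul hWm) hres hg, ?_⟩
  calc ∫ a, (p a - f a - g a) ^ 2 * W a ∂μ
      ≤ ∫ a, 2 * ((p a - f a) ^ 2 * W a) + 2 * (g a ^ 2 * W a) ∂μ :=
        integral_mono_of_nonneg (.of_forall fun a => mul_nonneg (sq_nonneg _) (hW a)) hdom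
          (.of_forall fun a => by nlinarith [mul_nonneg (sq_nonneg (p a - f a + g a)) (hW a)])
    _ ≤ 2 * ∫ a, f a ^ 2 * W a ∂μ + 2 * ∫ a, g a ^ 2 * W a ∂μ := by
        rw [integral_add (hres.const_mul 2) (hg.const_mul 2), integral_const_mul,
          integral_const_mul]
        linarith [integral_sub_sq_mul_le_of_orthogonal hW hfm hpm hWm hf hp horth]

end WeightedL2

section IteratedIntegrals

variable {α β : Type*} [MeasurableSpace α] [MeasurableSpace β] {μ : Measure α} {ν : Measure β}

theorem integral_add_integral_eq_or_eq_zero {F G H : β → ℝ} (hFGH : ∀ y, F y = G y - H y)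
    (hG : Integrable G ν) :
    ∫ y, F y ∂ν + ∫ y, H y ∂ν = ∫ y, G y ∂ν ∨ ∫ y, F y ∂ν = 0 ∧ ∫ y, H y ∂ν = 0 := by
  by_cases hH : Integrable H ν
  · left
    rw [funext hFGH, integral_sub hG hH]
    ring
  · have hF : ¬Integrable F ν := fun hF =>
      hH ((hG.sub hF).congr (.of_forall fun y => by simp [hFGH]))
    exact .inr ⟨integral_undef hF, integral_undef hH⟩

/-- `H x` need not be integrable: where it is not, `∫ F x` and `∫ H x` are both the junk
value `0`. -/
theorem integral_integral_le_of_sub {F G H : α → β → ℝ} {U R : α → ℝ}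
    (hFGH : ∀ x y, F x y = G x y - H x y) (hG : ∀ x, Integrable (G x) ν)
    (hGU : ∀ x, ∫ y, G x y ∂ν ≤ U x) (hGR : ∀ x, |∫ y, G x y ∂ν| ≤ R x)
    (hU0 : 0 ≤ U) (hU : Integrable U μ) (hR : Integrable R μ)
    (hHm : AEStronglyMeasurable (fun x => ∫ y, H x y ∂ν) μ)
    (hH : ∫ x, ∫ y, H x y ∂ν ∂μ = 0) :
    ∫ x, ∫ y, F x y ∂ν ∂μ ≤ ∫ x, U x ∂μ := by
  by_cases hF : Integrable (fun x => ∫ y, F x y ∂ν) μ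
  swap
  · rw [integral_undef hF]
    exact integral_nonneg hU0
  set Z : α → ℝ := fun x => ∫ y, F x y ∂ν + ∫ y, H x y ∂ν
  have hZ : ∀ x, Z x ≤ U x ∧ |Z x| ≤ R x := fun x => by
    rcases integral_add_integral_eq_or_eq_zero (hFGH x) (hG x) with h | ⟨hF0, hH0⟩
    · simp only [Z, h]
      exact ⟨hGU x, hGR x⟩
    · simp only [Z, hF0, hH0, add_zero, abs_zero]
      exact ⟨hU0 x, (abs_nonneg _).trans (hGR x)⟩
  have hZi : Integrable Z μ := hR.mono' (hF.1.add hHm) (.of_forall fun x => (hZ x).2)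
  have hHi : Integrable (fun x => ∫ y, H x y ∂ν) μ :=
    (hZi.sub hF).congr (.of_forall fun x => by simp [Z])
  calc ∫ x, ∫ y, F x y ∂ν ∂μ = ∫ x, Z x ∂μ - ∫ x, ∫ y, H x y ∂ν ∂μ := by
        rw [← integral_sub hZi hHi]
        simp [Z]
    _ ≤ ∫ x, U x ∂μ := by
        rw [hH, sub_zero]
        exact integral_mono hZi hU fun x => (hZ x).1

end IteratedIntegrals

theorem integrable_eval_mul_exp_neg_mul_sq {b : ℝ} (hb : 0 < b) (P : Polynomial ℝ) :
    Integrable fun v => P.eval v * exp (-b * v ^ 2) := by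
  induction P using Polynomial.induction_on' with
  | add P Q hP hQ =>
    simp only [Polynomial.eval_add, add_mul]
    exact hP.add hQ
  | monomial k c =>
    have h := (integrable_rpow_mul_exp_neg_mul_sq hb (s := k)
      (by linarith [k.cast_nonneg (α := ℝ)])).const_mul c
    simpa only [Polynomial.eval_monomial, rpow_natCast, mul_assoc] using h

theorem mem_span_of_triangular {K E : Type*} [Field K] [AddCommGroup E] [Module K E]
    {a : ℕ → ℕ → K} (ha : ∀ j, a j j ≠ 0) (V : ℕ → E) {n j : ℕ} (hj : j ≤ n) :
    V j ∈ Submodule.span K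
      ((fun l => ∑ i ∈ range (l + 1), a l i • V i) '' ↑(range (n + 1))) := by
  induction j using Nat.strong_induction_on with
  | _ j ih =>
    set T := Submodule.span K ((fun l => ∑ i ∈ range (l + 1), a l i • V i) '' ↑(range (n + 1)))
    have hrow : ∑ i ∈ range (j + 1), a j i • V i ∈ T :=
      Submodule.subset_span ⟨j, by simpa using Nat.lt_succ_of_le hj, rfl⟩
    have hlower : ∑ i ∈ range j, a j i • V i ∈ T :=
      T.sum_mem fun i hi => T.smul_mem _ (ih i (mem_range.1 hi) ((mem_range.1 hi).le.trans hj))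
    have hVj : V j =
        (a j j)⁻¹ • (∑ i ∈ range (j + 1), a j i • V i - ∑ i ∈ range j, a j i • V i) := by
      rw [sum_range_succ, add_sub_cancel_left, smul_smul, inv_mul_cancel₀ (ha j), one_smul]
    rw [hVj]
    exact T.smul_mem _ (T.sub_mem hrow hlower)

theorem sqrt_le_of_hasDerivAt_le_mul_sqrt {E E' k κ : ℝ → ℝ} (hE0 : ∀ t, 0 ≤ t → 0 ≤ E t)
    (hE : ∀ t, 0 ≤ t → HasDerivAt E (E' t) t) (hκ : ∀ t, 0 ≤ t → HasDerivAt κ (k t) t)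
    (hk : ∀ t, 0 ≤ t → 0 ≤ k t) (hbound : ∀ t, 0 ≤ t → E' t ≤ 2 * k t * √(E t))
    {t : ℝ} (ht : 0 ≤ t) :
    √(E t) ≤ √(E 0 + 1) + (κ t - κ 0) := by
  -- `√(E + 1)` is differentiable even where `E` vanishes
  have hψ : ∀ s, 0 ≤ s → HasDerivAt (fun s => √(E s + 1)) (E' s / (2 * √(E s + 1))) s :=
    fun s hs => ((hE s hs).add_const 1).sqrt (by linarith [hE0 s hs])
  have hslope : ∀ s, 0 ≤ s → E' s / (2 * √(E s + 1)) ≤ k s := fun s hs => by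
    have hpos : 0 < √(E s + 1) := sqrt_pos.2 (by linarith [hE0 s hs])
    have hle : √(E s) ≤ √(E s + 1) := sqrt_le_sqrt (by linarith)
    rw [div_le_iff₀ (by positivity)]
    nlinarith [hbound s hs, mul_le_mul_of_nonneg_left hle (hk s hs)]
  have hcomp := image_le_of_deriv_right_le_deriv_boundary (a := 0) (b := t)
    (f := fun s => √(E s + 1)) (B := fun s => √(E 0 + 1) + (κ s - κ 0))
    (fun s hs => (hψ s hs.1).continuousAt.continuousWithinAt)
    (fun s hs => (hψ s hs.1).hasDerivWithinAt) (by simp)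
    (fun s hs => (((hκ s hs.1).sub_const (κ 0)).const_add _).continuousAt.continuousWithinAt)
    (fun s hs => (((hκ s hs.1).sub_const (κ 0)).const_add _).hasDerivWithinAt)
    (fun s hs => hslope s hs.1) ⟨ht, le_rfl⟩
  exact (sqrt_le_sqrt (by linarith)).trans hcomp

theorem sqrt_le_mul_one_add_pow_of_hasDerivAt {E E' : ℝ → ℝ} {K : ℝ} (n : ℕ) (hK : 0 ≤ K)
    (hE0 : ∀ t, 0 ≤ t → 0 ≤ E t) (hE : ∀ t, 0 ≤ t → HasDerivAt E (E' t) t)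
    (hbound : ∀ t, 0 ≤ t → E' t ≤ 2 * (K * (1 + t) ^ n) * √(E t)) {t : ℝ} (ht : 0 ≤ t) :
    √(E t) ≤ (√(E 0 + 1) + K) * (1 + t) ^ (n + 1) := by
  have hκ : ∀ s : ℝ, HasDerivAt (fun s => K * (1 + s) ^ (n + 1) / (n + 1)) (K * (1 + s) ^ n) s :=
    fun s => by
      refine (((((hasDerivAt_id s).const_add 1).pow (n + 1)).const_mul K).div_const
        ((n : ℝ) + 1)).congr_deriv ?_
      simp only [id, Nat.add_sub_cancel, mul_one]
      push_cast
      field_simp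
  have h := sqrt_le_of_hasDerivAt_le_mul_sqrt hE0 hE (fun s _ => hκ s)
    (fun s hs => by positivity) hbound ht
  have hpow : 1 ≤ (1 + t) ^ (n + 1) := one_le_pow₀ (by linarith)
  have hκt : K * (1 + t) ^ (n + 1) / (n + 1) ≤ K * (1 + t) ^ (n + 1) :=
    div_le_self (by positivity) (by linarith [n.cast_nonneg (α := ℝ)])
  have hsqrt : √(E 0 + 1) ≤ √(E 0 + 1) * (1 + t) ^ (n + 1) :=
    le_mul_of_one_le_right (sqrt_nonneg _) hpow
  simp only [add_zero, one_pow, mul_one] at h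
  linarith [div_nonneg hK (by positivity : (0 : ℝ) ≤ n + 1)]

theorem sq_le_sq_mul_pow_of_sqrt_le {E B t : ℝ} {l n : ℕ} (ht : 0 ≤ t) (hl : l ≤ n)
    (h : √E ≤ B * (1 + t) ^ l) : E ≤ B ^ 2 * ((1 + t) ^ n) ^ 2 := by
  obtain ⟨hBt, hE⟩ := sqrt_le_iff.1 h
  have hB : 0 ≤ B := nonneg_of_mul_nonneg_left hBt (by positivity)
  calc E ≤ (B * (1 + t) ^ l) ^ 2 := hE
    _ ≤ (B * (1 + t) ^ n) ^ 2 := by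
        gcongr
        linarith
    _ = B ^ 2 * ((1 + t) ^ n) ^ 2 := by ring

namespace EnergyHyp

variable {M a : ℝ → ℝ} {w wt wx : ℝ → ℝ → ℝ → ℝ}

theorem continuous_wt (hE : EnergyHyp M a w wt wx) (t x : ℝ) : Continuous (wt t x) :=
  hE.cont_wt.comp (by fun_prop : Continuous fun v : ℝ => (t, x, v))

theorem continuous_wx (hE : EnergyHyp M a w wt wx) (t x : ℝ) : Continuous (wx t x) :=
  hE.cont_wx.comp (by fun_prop : Continuous fun v : ℝ => (t, x, v))

theorem continuous_in_x (hE : EnergyHyp M a w wt wx) {t : ℝ} (ht : 0 ≤ t) (v : ℝ) :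
    Continuous fun x => w t x v :=
  continuous_iff_continuousAt.2 fun x => (hE.hasDerivAt_x t x v ht).continuousAt

end EnergyHyp

namespace IsProjection

variable {M : ℝ → ℝ} {w Pw : ℝ → ℝ → ℝ → ℝ}

theorem continuous_slice (h : IsProjection M w Pw) (t x : ℝ) : Continuous (Pw t x) := by
  obtain ⟨a, b, c, hP⟩ := h.1 t x
  rw [funext hP]
  fun_prop

theorem integral_sub_mul_eq_zero (h : IsProjection M w Pw) (t x : ℝ) :
    ∫ v, (w t x v - Pw t x v) * Pw t x v * M v = 0 := by
  obtain ⟨a, b, c, hP⟩ := h.1 t x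
  simpa only [hP] using h.2 t x a b c

theorem integrable_sq_mul (h : IsProjection M w Pw) {ρ : ℝ}
    (hM : ∀ v, M v = ρ / √(2 * π) * exp (-v ^ 2 / 2)) (t x : ℝ) :
    Integrable fun v => Pw t x v ^ 2 * M v := by
  open Polynomial in
  obtain ⟨a, b, c, hP⟩ := h.1 t x
  refine ((integrable_eval_mul_exp_neg_mul_sq (b := 1 / 2) (by norm_num)
    ((C a + C b * X + C c * X ^ 2) ^ 2)).const_mul (ρ / √(2 * π))).congr (.of_forall fun v => ?_)
  simp only [hP, hM, eval_pow, eval_add, eval_mul, eval_C, eval_X]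
  ring_nf

theorem continuous_of_pde (h : IsProjection M w Pw) {wt : ℝ → ℝ → ℝ → ℝ} {T : ℝ → ℝ}
    {t x : ℝ} (hwt : Continuous (wt t x)) (hT : Continuous T)
    (hPDE : ∀ v, wt t x v + T v = Pw t x v - w t x v) : Continuous (w t x) := by
  have hw : w t x = fun v => Pw t x v - (wt t x v + T v) := funext fun v => by
    linarith [hPDE v]
  rw [hw]
  exact (h.continuous_slice t x).sub (hwt.add hT)

end IsProjection

theorem EnergyHyp.integral_sq_le_of_pde {M a : ℝ → ℝ} {u ut ux P : ℝ → ℝ → ℝ → ℝ} {T : ℝ → ℝ}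
    {t x : ℝ} (hE : EnergyHyp M a u ut ux) (hproj : IsProjection M u P) (hM0 : 0 ≤ M)
    (hMc : Continuous M) (hP : Integrable fun v => P t x v ^ 2 * M v) (ht : 0 ≤ t)
    (hT : Continuous T) (hPDE : ∀ v, ut t x v + T v = P t x v - u t x v)
    (hut : Integrable fun v => ut t x v ^ 2 * M v) :
    Integrable (fun v => T v ^ 2 * M v) ∧
      ∫ v, T v ^ 2 * M v ≤ 2 * (∫ v, u t x v ^ 2 * M v) + 2 * ∫ v, ut t x v ^ 2 * M v := by
  have hu := hproj.continuous_of_pde (hE.continuous_wt t x) hT hPDE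
  have hres : ∀ v, T v = P t x v - u t x v - ut t x v := fun v => by linarith [hPDE v]
  simp only [hres]
  exact integral_residual_sub_sq_mul_le hM0 hu.aestronglyMeasurable
    (hproj.continuous_slice t x).aestronglyMeasurable (hE.continuous_wt t x).aestronglyMeasurable
    hMc.aestronglyMeasurable (hE.int_v t x ht) hP hut (hproj.integral_sub_mul_eq_zero t x)

theorem EnergyHyp.integral_mul_deriv_le {M a : ℝ → ℝ} {u ut ux P : ℝ → ℝ → ℝ → ℝ}
    {S : ℝ → ℝ → ℝ} {Φ : ℝ → ℝ} {t : ℝ} (hE : EnergyHyp M a u ut ux)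
    (hproj : IsProjection M u P) (hM0 : 0 ≤ M) (hMc : Continuous M) (ha : Continuous a)
    (hP : ∀ x, Integrable fun v => P t x v ^ 2 * M v) (ht : 0 ≤ t)
    (hPDE : ∀ x v, ut t x v + (S x v + a v * ux t x v) = P t x v - u t x v)
    (hS : ∀ x, Continuous (S x)) (hS2 : ∀ x, Integrable fun v => S x v ^ 2 * M v)
    (hSΦ : ∀ x, ∫ v, S x v ^ 2 * M v ≤ Φ x) (hΦ : Integrable Φ) :
    ∫ x, ∫ v, u t x v * ut t x v * M v ≤
      √(∫ x, ∫ v, u t x v ^ 2 * M v) * √(∫ x, Φ x) := by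
  have hu : ∀ x, Continuous (u t x) := fun x =>
    hproj.continuous_of_pde (hE.continuous_wt t x)
      ((hS x).add (ha.mul (hE.continuous_wx t x))) (hPDE x)
  -- `u t` is continuous in `x` and in `v` separately, hence jointly measurable
  have hum : StronglyMeasurable (Function.uncurry (u t)) :=
    stronglyMeasurable_uncurry_of_continuous_of_stronglyMeasurable (hE.continuous_in_x ht)
      fun x => (hu x).stronglyMeasurable
  have huxm : StronglyMeasurable fun z : ℝ × ℝ => ux t z.1 z.2 :=
    (hE.cont_wx.comp (by fun_prop : Continuous fun z : ℝ × ℝ => (t, z.1, z.2))).stronglyMeasurable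
  have hHm : AEStronglyMeasurable (fun x => ∫ v, a v * u t x v * ux t x v * M v) :=
    (((((ha.comp continuous_snd).stronglyMeasurable.mul hum).mul huxm).mul
      (hMc.comp continuous_snd).stronglyMeasurable).integral_prod_right'
        (f := fun z : ℝ × ℝ => a z.2 * u t z.1 z.2 * ux t z.1 z.2 * M z.2)).aestronglyMeasurable
  have hA0 : 0 ≤ fun x => ∫ v, u t x v ^ 2 * M v := fun x =>
    integral_nonneg fun v => mul_nonneg (sq_nonneg _) (hM0 v)
  have hΦ0 : 0 ≤ Φ := fun x =>
    (integral_nonneg fun v => mul_nonneg (sq_nonneg _) (hM0 v)).trans (hSΦ x)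
  have hslice := fun x => integral_mul_residual_sub_le hM0 (hu x).aestronglyMeasurable
    (hproj.continuous_slice t x).aestronglyMeasurable (hS x).aestronglyMeasurable
    hMc.aestronglyMeasurable (hE.int_v t x ht) (hP x) (hS2 x) (hproj.integral_sub_mul_eq_zero t x)
  have hSle : ∀ x, √(∫ v, S x v ^ 2 * M v) ≤ √(Φ x) := fun x => sqrt_le_sqrt (hSΦ x)
  have hU := integrable_sqrt_mul_sqrt hA0 hΦ0 (hE.int_x t ht) hΦ
  refine (integral_integral_le_of_sub (H := fun x v => a v * u t x v * ux t x v * M v)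
    (fun x v => ?_) (fun x => (hslice x).1) (fun x => (hslice x).2.1.trans ?_)
    (fun x => (hslice x).2.2.trans ?_) (fun x => by positivity) hU ((hE.int_x t ht).add hU)
    hHm (hE.transport_zero t ht)).trans
    (integral_sqrt_mul_sqrt_le hA0 hΦ0 (hE.int_x t ht) hΦ)
  · rw [show ut t x v = P t x v - u t x v - S x v - a v * ux t x v by linarith [hPDE x v]]
    ring
  · exact mul_le_mul_of_nonneg_left (hSle x) (sqrt_nonneg _)
  · exact add_le_add le_rfl (mul_le_mul_of_nonneg_left (hSle x) (sqrt_nonneg _))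

theorem exists_integrable_bound_sq_sum {ι : Type*} (s : Finset ι) (c : ι → ℝ) {M : ℝ → ℝ}
    {T : ι → ℝ → ℝ → ℝ} {a b : ι → ℝ → ℝ} {D : ι → ℝ} (hM0 : 0 ≤ M) (hMc : Continuous M)
    (hT : ∀ i ∈ s, ∀ x, Continuous (T i x))
    (hTab : ∀ i ∈ s, ∀ x, Integrable (fun v => T i x v ^ 2 * M v) ∧
      ∫ v, T i x v ^ 2 * M v ≤ 2 * a i x + 2 * b i x)
    (ha : ∀ i ∈ s, Integrable (a i)) (hb : ∀ i ∈ s, Integrable (b i))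
    (haD : ∀ i ∈ s, ∫ x, a i x ≤ D i) (hbD : ∀ i ∈ s, ∫ x, b i x ≤ D i) :
    ∃ Φ : ℝ → ℝ, Integrable Φ ∧ ∫ x, Φ x ≤ ∑ i ∈ s, #s * c i ^ 2 * (4 * D i) ∧
      ∀ x, Integrable (fun v => (∑ i ∈ s, c i * T i x v) ^ 2 * M v) ∧
        ∫ v, (∑ i ∈ s, c i * T i x v) ^ 2 * M v ≤ Φ x := by
  have hab : ∀ i ∈ s, Integrable (fun x => 2 * a i x + 2 * b i x) :=
    fun i hi => ((ha i hi).const_mul 2).add ((hb i hi).const_mul 2)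
  refine ⟨fun x => ∑ i ∈ s, #s * c i ^ 2 * (2 * a i x + 2 * b i x),
    integrable_finsetSum _ fun i hi => (hab i hi).const_mul _, ?_, fun x => ?_⟩
  · rw [integral_finsetSum _ fun i hi => (hab i hi).const_mul _]
    refine sum_le_sum fun i hi => ?_
    rw [integral_const_mul, integral_add ((ha i hi).const_mul 2) ((hb i hi).const_mul 2),
      integral_const_mul, integral_const_mul]
    exact mul_le_mul_of_nonneg_left (by linarith [haD i hi, hbD i hi]) (by positivity)
  · obtain ⟨hint, hle⟩ := integral_sq_sum_mul_le s c hM0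
      (((continuous_finsetSum _ fun i hi => continuous_const.mul (hT i hi x)).pow 2).mul
        hMc).aestronglyMeasurable fun i hi => (hTab i hi x).1
    exact ⟨hint, hle.trans (sum_le_sum fun i hi =>
      mul_le_mul_of_nonneg_left (hTab i hi x).2 (by positivity))⟩

def sensitivityTransport (τ : ℕ → ℝ) (qx : ℕ → ℝ → ℝ → ℝ → ℝ) (k : ℕ) (t x v : ℝ) : ℝ :=
  ∑ j ∈ range (k + 1), (Nat.choose k j : ℝ) * τ (k - j) * v * qx j t x v

section Transport

variable {τ : ℕ → ℝ} {qx : ℕ → ℝ → ℝ → ℝ → ℝ}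

theorem sensitivityTransport_eq_sum_smul (k : ℕ) :
    sensitivityTransport τ qx k =
      ∑ j ∈ range (k + 1), ((Nat.choose k j : ℝ) * τ (k - j)) • fun t x v => v * qx j t x v := by
  ext t x v
  simp only [sensitivityTransport, Finset.sum_apply, Pi.smul_apply, smul_eq_mul]
  exact sum_congr rfl fun j _ => by ring

theorem exists_sensitivityTransport_succ_eq (hτ0 : τ 0 ≠ 0) (n : ℕ) :
    ∃ c : ℕ → ℝ, ∀ t x v, sensitivityTransport τ qx (n + 1) t x v =
      ∑ l ∈ range (n + 1), c l * sensitivityTransport τ qx l t x v +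
        τ 0 * v * qx (n + 1) t x v := by
  have hmem : ∑ j ∈ range (n + 1), ((Nat.choose (n + 1) j : ℝ) * τ (n + 1 - j)) •
      (fun t x v => v * qx j t x v) ∈
        Submodule.span ℝ (sensitivityTransport τ qx '' ↑(range (n + 1))) := by
    simp only [funext sensitivityTransport_eq_sum_smul]
    exact Submodule.sum_mem _ fun j hj => Submodule.smul_mem _ _ <|
      mem_span_of_triangular (a := fun l i => (Nat.choose l i : ℝ) * τ (l - i))
        (fun j => by simpa using hτ0) _ (mem_range_succ_iff.1 hj)
  obtain ⟨c, hc⟩ := (Submodule.mem_span_image_finset_iff_exists_fun' ℝ).1 hmem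
  refine ⟨c, fun t x v => ?_⟩
  have hcv := congrFun (congrFun (congrFun hc t) x) v
  simp only [Finset.sum_apply, Pi.smul_apply, smul_eq_mul] at hcv
  rw [sensitivityTransport, sum_range_succ, hcv, Nat.choose_self, Nat.sub_self, Nat.cast_one,
    one_mul]
  exact congrArg (· + _) (sum_congr rfl fun j _ => by ring)

theorem continuous_sensitivityTransport {k : ℕ}
    (hqx : ∀ j ≤ k, Continuous fun z : ℝ × ℝ × ℝ => qx j z.1 z.2.1 z.2.2) (t x : ℝ) :
    Continuous (sensitivityTransport τ qx k t x) :=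
  continuous_finsetSum _ fun j hj => by
    have := (hqx j (mem_range_succ_iff.1 hj)).comp (by fun_prop : Continuous fun v : ℝ => (t, x, v))
    fun_prop

end Transport

theorem integral_mul_deriv_le_of_lower_bounds {M : ℝ → ℝ} {τ : ℕ → ℝ} {σ : ℝ}
    {q qt qx Pq : ℕ → ℝ → ℝ → ℝ → ℝ} {B c : ℕ → ℝ} {n : ℕ} {t : ℝ} (hM0 : 0 ≤ M)
    (hMc : Continuous M) (ht : 0 ≤ t) (hτ0 : τ 0 = σ)
    (hproj : ∀ k ≤ n + 1, IsProjection M (q k) (Pq k))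
    (hPq : ∀ k ≤ n + 1, ∀ x, Integrable fun v => Pq k t x v ^ 2 * M v)
    (hPDE : ∀ k ≤ n + 1, ∀ x v,
      qt k t x v + sensitivityTransport τ qx k t x v = Pq k t x v - q k t x v)
    (hc : ∀ x v, sensitivityTransport τ qx (n + 1) t x v =
      ∑ l ∈ range (n + 1), c l * sensitivityTransport τ qx l t x v + τ 0 * v * qx (n + 1) t x v)
    (hE : ∀ k ≤ n + 1, EnergyHyp M (fun v => σ * v) (q k) (qt k) (qx k))
    (hqt : ∀ k ≤ n, ∀ x, Integrable fun v => qt k t x v ^ 2 * M v)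
    (hqt' : ∀ k ≤ n, Integrable fun x => ∫ v, qt k t x v ^ 2 * M v)
    (hB : ∀ k ≤ n, √(∫ x, ∫ v, q k t x v ^ 2 * M v) ≤ B k * (1 + t) ^ k ∧
      √(∫ x, ∫ v, qt k t x v ^ 2 * M v) ≤ B k * (1 + t) ^ k) :
    ∫ x, ∫ v, q (n + 1) t x v * qt (n + 1) t x v * M v ≤
      √(∑ l ∈ range (n + 1), #(range (n + 1)) * c l ^ 2 * (4 * B l ^ 2)) * (1 + t) ^ n *
        √(∫ x, ∫ v, q (n + 1) t x v ^ 2 * M v) := by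
  set K := √(∑ l ∈ range (n + 1), #(range (n + 1)) * c l ^ 2 * (4 * B l ^ 2))
  have hle : ∀ l ∈ range (n + 1), l ≤ n := fun l hl => mem_range_succ_iff.1 hl
  have hle' : ∀ l ∈ range (n + 1), l ≤ n + 1 := fun l hl => (hle l hl).trans n.le_succ
  have hcont : ∀ k ≤ n + 1, ∀ x, Continuous (sensitivityTransport τ qx k t x) :=
    fun k hk => continuous_sensitivityTransport (fun j hj => (hE j (hj.trans hk)).cont_wx) t
  obtain ⟨Φ, hΦ, hΦle, hS⟩ := exists_integrable_bound_sq_sum (range (n + 1)) c hM0 hMc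
    (D := fun l => B l ^ 2 * ((1 + t) ^ n) ^ 2) (fun l hl => hcont l (hle' l hl))
    (fun l hl x => (hE l (hle' l hl)).integral_sq_le_of_pde (hproj l (hle' l hl)) hM0 hMc
      (hPq l (hle' l hl) x) ht (hcont l (hle' l hl) x) (hPDE l (hle' l hl) x) (hqt l (hle l hl) x))
    (fun l hl => (hE l (hle' l hl)).int_x t ht) (fun l hl => hqt' l (hle l hl))
    (fun l hl => sq_le_sq_mul_pow_of_sqrt_le ht (hle l hl) (hB l (hle l hl)).1)
    (fun l hl => sq_le_sq_mul_pow_of_sqrt_le ht (hle l hl) (hB l (hle l hl)).2)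
  have hΦK : ∫ x, Φ x ≤ (K * (1 + t) ^ n) ^ 2 := by
    refine hΦle.trans (le_of_eq ?_)
    rw [mul_pow, sq_sqrt (by positivity), sum_mul]
    exact sum_congr rfl fun l _ => by ring
  have hPDEtop : ∀ x v, qt (n + 1) t x v + (∑ l ∈ range (n + 1),
      c l * sensitivityTransport τ qx l t x v + σ * v * qx (n + 1) t x v) =
        Pq (n + 1) t x v - q (n + 1) t x v := fun x v => by
    rw [← hτ0, ← hc]
    exact hPDE (n + 1) le_rfl x v
  calc _ ≤ √(∫ x, ∫ v, q (n + 1) t x v ^ 2 * M v) * √(∫ x, Φ x) :=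
        (hE (n + 1) le_rfl).integral_mul_deriv_le (hproj (n + 1) le_rfl) hM0 hMc (by fun_prop)
          (hPq (n + 1) le_rfl) ht hPDEtop
          (fun x => continuous_finsetSum _ fun l hl =>
            continuous_const.mul (hcont l (hle' l hl) x))
          (fun x => (hS x).1) (fun x => (hS x).2) hΦ
    _ ≤ √(∫ x, ∫ v, q (n + 1) t x v ^ 2 * M v) * (K * (1 + t) ^ n) :=
        mul_le_mul_of_nonneg_left (sqrt_le_iff.2 ⟨by positivity, hΦK⟩) (sqrt_nonneg _)
    _ = _ := mul_comm _ _

theorem polynomial_growth_higher_sensitivities_temperature_general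
    (ρstar Tstar : ℝ) (hρ : 0 < ρstar) (hT : 0 < Tstar)
    (M₁ : ℝ → ℝ)
    (hM₁ : ∀ v, M₁ v = ρstar / Real.sqrt (2 * Real.pi) * Real.exp (-v ^ 2 / 2))
    (n : ℕ)
    (τ : ℕ → ℝ) (hτ0 : τ 0 = Real.sqrt Tstar)
    (q qt qx Pq : ℕ → ℝ → ℝ → ℝ → ℝ)
    (hproj : ∀ k, k ≤ n + 1 → IsProjection M₁ (q k) (Pq k))
    (hPDE : ∀ k, k ≤ n + 1 → ∀ t x v, 0 ≤ t →
      qt k t x v +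
        ∑ j ∈ Finset.range (k + 1),
          (Nat.choose k j : ℝ) * τ (k - j) * v * qx j t x v =
        Pq k t x v - q k t x v)
    (hE : ∀ k, k ≤ n + 1 →
      EnergyHyp M₁ (fun v => Real.sqrt Tstar * v) (q k) (qt k) (qx k))
    -- each `∂ₜ q⁽ᵏ⁾`, `k ≤ n`, satisfies the energy hypotheses
    (qtt qtx : ℕ → ℝ → ℝ → ℝ → ℝ)
    (hEt : ∀ k, k ≤ n →
      EnergyHyp M₁ (fun v => Real.sqrt Tstar * v) (qt k) (qtt k) (qtx k))
    (B : ℕ → ℝ)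
    (hB : ∀ k, k ≤ n → ∀ t : ℝ, 0 ≤ t →
      Real.sqrt (∫ x, ∫ v, (q k t x v) ^ 2 * M₁ v) ≤ B k * (1 + t) ^ k ∧
      Real.sqrt (∫ x, ∫ v, (qt k t x v) ^ 2 * M₁ v) ≤ B k * (1 + t) ^ k) :
    ∃ Cn : ℝ, ∀ t : ℝ, 0 ≤ t →
      Real.sqrt (∫ x, ∫ v, (q (n + 1) t x v) ^ 2 * M₁ v) ≤
        Cn * (1 + t) ^ (n + 1) := by
  have hM0 : 0 ≤ M₁ := fun v => by rw [hM₁]; positivity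
  have hMc : Continuous M₁ := by rw [funext hM₁]; fun_prop
  obtain ⟨c, hc⟩ := exists_sensitivityTransport_succ_eq (qx := qx) (hτ0 ▸ (sqrt_pos.2 hT).ne') n
  set K := √(∑ l ∈ range (n + 1), #(range (n + 1)) * c l ^ 2 * (4 * B l ^ 2))
  refine ⟨_, fun t ht => sqrt_le_mul_one_add_pow_of_hasDerivAt (K := K) n (sqrt_nonneg _)
    (fun t _ => integral_nonneg fun x => integral_nonneg fun v => mul_nonneg (sq_nonneg _) (hM0 v))
    (hE (n + 1) le_rfl).energy_hasDerivAt (fun t ht => ?_) ht⟩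
  have hderiv := integral_mul_deriv_le_of_lower_bounds hM0 hMc ht hτ0 hproj
    (fun k hk => (hproj k hk).integrable_sq_mul hM₁ t) (fun k hk x v => hPDE k hk t x v ht)
    (hc t) hE (fun k hk x => (hEt k hk).int_v t x ht) (fun k hk => (hEt k hk).int_x t ht)
    (fun k hk => hB k hk t ht)
  linarith

/-- **Polynomial growth of higher-order sensitivities w.r.t. the temperature of
the Maxwellian.**  Fix `ρ* > 0`, `T* > 0` and let `M₁(v) = (ρ*/√(2π)) exp(−v²/2)`.
Fix `n ≥ 0`, constants `τ₀ = √T* > 0` and `τ₁, …, τ_{n+1}` with `|τ_j| ≤ C` and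
`|τ_j/√T*| ≤ C`, and functions `q⁽⁰⁾, …, q⁽ⁿ⁺¹⁾` such that each `q⁽ᵏ⁾`
(`k ≤ n+1`) is a classical solution of
`∂ₜq⁽ᵏ⁾ + Σ_{j=0}^{k} binom(k,j) τ_{k−j} v ∂ₓq⁽ʲ⁾ = L₁ q⁽ᵏ⁾`, with each `q⁽ᵏ⁾`
(`k ≤ n+1`) and each `∂ₜq⁽ᵏ⁾` (`k ≤ n`) satisfying the energy hypotheses.
If moreover for each `k ≤ n` there is `B_k` with `‖q⁽ᵏ⁾(t)‖ ≤ B_k (1+t)^k` and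
`‖∂ₜq⁽ᵏ⁾(t)‖ ≤ B_k (1+t)^k` for all `t ≥ 0`, then there is a constant `C_{n+1}`
with `‖q⁽ⁿ⁺¹⁾(t)‖ ≤ C_{n+1} (1+t)^{n+1}` for all `t ≥ 0`. -/
theorem polynomial_growth_higher_sensitivities_temperature
    (ρstar Tstar : ℝ) (hρ : 0 < ρstar) (hT : 0 < Tstar)
    (M₁ : ℝ → ℝ)
    (hM₁ : ∀ v, M₁ v = ρstar / Real.sqrt (2 * Real.pi) * Real.exp (-v ^ 2 / 2))
    (n : ℕ)
    (τ : ℕ → ℝ) (C : ℝ) (hτ0 : τ 0 = Real.sqrt Tstar)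
    (hτ : ∀ j, 1 ≤ j → j ≤ n + 1 → |τ j| ≤ C ∧ |τ j / Real.sqrt Tstar| ≤ C)
    (q qt qx Pq : ℕ → ℝ → ℝ → ℝ → ℝ)
    (hproj : ∀ k, k ≤ n + 1 → IsProjection M₁ (q k) (Pq k))
    (hPDE : ∀ k, k ≤ n + 1 → ∀ t x v, 0 ≤ t →
      qt k t x v +
        ∑ j ∈ Finset.range (k + 1),
          (Nat.choose k j : ℝ) * τ (k - j) * v * qx j t x v =
        Pq k t x v - q k t x v)
    (hE : ∀ k, k ≤ n + 1 →
      EnergyHyp M₁ (fun v => Real.sqrt Tstar * v) (q k) (qt k) (qx k))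
    -- each `∂ₜ q⁽ᵏ⁾`, `k ≤ n`, satisfies the energy hypotheses
    (qtt qtx : ℕ → ℝ → ℝ → ℝ → ℝ)
    (hEt : ∀ k, k ≤ n →
      EnergyHyp M₁ (fun v => Real.sqrt Tstar * v) (qt k) (qtt k) (qtx k))
    (B : ℕ → ℝ)
    (hB : ∀ k, k ≤ n → ∀ t : ℝ, 0 ≤ t →
      Real.sqrt (∫ x, ∫ v, (q k t x v) ^ 2 * M₁ v) ≤ B k * (1 + t) ^ k ∧
      Real.sqrt (∫ x, ∫ v, (qt k t x v) ^ 2 * M₁ v) ≤ B k * (1 + t) ^ k) :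
    ∃ Cn : ℝ, ∀ t : ℝ, 0 ≤ t →
      Real.sqrt (∫ x, ∫ v, (q (n + 1) t x v) ^ 2 * M₁ v) ≤
        Cn * (1 + t) ^ (n + 1) :=
  polynomial_growth_higher_sensitivities_temperature_general ρstar Tstar hρ hT M₁ hM₁ n τ hτ0 q qt
    qx Pq hproj hPDE hE qtt qtx hEt B hB
end
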